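/- arXiv:1204.3197 — 3 statements merged into one kernel-verified Lean document; each statement's English description precedes it below -/
import Mathlib

section
/- For every ε > 0 there exist p_ε ∈ (0,1) and a binary sequence η ∈ Ξ = {0,1}^ℕ such that the set of zeroes Z_η = {i ≥ 1 : η_i = 0} has discrete Hausdorff dimension dim_H(Z_η) ≥ 1 − ε, and for every p with 0 < p < p_ε one has ℙ_p{ξ ∈ Ξ : (η, ξ) is compatible} > 0. -/
open Filter Set MeasureTheory
open scoped ENNReal NNReal

namespace Paper

/-! ### Binary sequences and compatibility -/

/-- Delete the `i`-th entry of a sequence, shifting everything to the right of it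
one step to the left. -/
def deleteAt {α : Type*} (ξ : ℕ → α) (i : ℕ) : ℕ → α :=
  fun j => if j < i then ξ j else ξ (j + 1)

/-- The annihilation operator `Δ_i^0` on binary sequences: delete the `i`-th digit
if it is a zero (`false`), otherwise do nothing. -/
def delta0 (ξ : ℕ → Bool) (i : ℕ) : ℕ → Bool :=
  if ξ i = false then deleteAt ξ i else ξ

/-- The annihilation operator `Δ_i^1` on binary sequences: delete the `i`-th digit
if it is a one (`true`), otherwise do nothing. -/
def delta1 (ξ : ℕ → Bool) (i : ℕ) : ℕ → Bool :=
  if ξ i = true then deleteAt ξ i else ξ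

/-- `Reach1 η η'` : `η'` is obtained from `η` by finitely many applications of
operators `Δ_·^1`. -/
def Reach1 : (ℕ → Bool) → (ℕ → Bool) → Prop :=
  Relation.ReflTransGen fun a b => ∃ i, b = delta1 a i

/-- `Reach0 ξ ξ'` : `ξ'` is obtained from `ξ` by finitely many applications of
operators `Δ_·^0`. -/
def Reach0 : (ℕ → Bool) → (ℕ → Bool) → Prop :=
  Relation.ReflTransGen fun a b => ∃ i, b = delta0 a i

/-- Compatibility of an ordered pair of binary sequences: one can delete ones from `η`
and zeroes from `ξ` so that the resulting sequences converge (in the product topology)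
to a common limit. -/
def Compatible (η ξ : ℕ → Bool) : Prop :=
  ∃ (ηs ξs : ℕ → ℕ → Bool) (l : ℕ → Bool),
    (∀ k, Reach1 η (ηs k)) ∧ (∀ k, Reach0 ξ (ξs k)) ∧
      Tendsto ηs atTop (nhds l) ∧ Tendsto ξs atTop (nhds l)

/-- `μ` is the product Bernoulli measure on `{0,1}^ℕ` with parameter `p`. -/
def IsBernoulliProduct (μ : Measure (ℕ → Bool)) (p : ℝ) : Prop :=
  IsProbabilityMeasure μ ∧
    ∀ (s : Finset ℕ) (b : ℕ → Bool),
      μ {ξ | ∀ i ∈ s, ξ i = b i} = ∏ i ∈ s, ENNReal.ofReal (if b i then p else 1 - p)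

/-- The set `Ξ_∞` of binary sequences with infinitely many ones and infinitely many
zeroes. -/
def Xinf (ξ : ℕ → Bool) : Prop :=
  (∀ n, ∃ m, n ≤ m ∧ ξ m = true) ∧ ∀ n, ∃ m, n ≤ m ∧ ξ m = false

/-- Length of the run of ones of `ξ` starting at position `n` (junk value `0` if the
run is infinite). -/
noncomputable def runLen (ξ : ℕ → Bool) (n : ℕ) : ℕ :=
  letI := Classical.dec (∃ k, ξ (n + k) = false)
  if h : ∃ k, ξ (n + k) = false then Nat.find h else 0

/-- The position in `ξ` at which the `j`-th letter of the weighted word `f ξ` starts. -/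
noncomputable def fpos (ξ : ℕ → Bool) : ℕ → ℕ
  | 0 => 0
  | j + 1 => fpos ξ j + max (runLen ξ (fpos ξ j)) 1

/-- The run-length map `f : Ξ_∞ → Ψ`, replacing each maximal run of ones by a single
letter whose weight is the length of the run (zeroes being kept as letters of
weight `0`). -/
noncomputable def fmap (ξ : ℕ → Bool) : ℕ → ℕ :=
  fun j => runLen ξ (fpos ξ j)

/-! ### Weighted words -/

/-- The set `Ψ` of weighted words: a weight `≥ 1` is always followed by a weight `0`. -/
def Psi (ψ : ℕ → ℕ) : Prop := ∀ i, 1 ≤ ψ i → ψ (i + 1) = 0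

/-- The annihilation operator `Δ_i^0` on weighted words. -/
def pdelta0 (ψ : ℕ → ℕ) (i : ℕ) : ℕ → ℕ :=
  if ψ i ≠ 0 then ψ
  else if i = 0 ∨ ψ (i - 1) = 0 ∨ ψ (i + 1) = 0 then deleteAt ψ i
  else fun j => if j + 1 < i then ψ j else if j + 1 = i then ψ (i - 1) + ψ (i + 1) else ψ (j + 2)

/-- The annihilation operator `Δ_i^1` on weighted words. -/
def pdelta1 (ψ : ℕ → ℕ) (i : ℕ) : ℕ → ℕ :=
  if ψ i = 0 then ψ
  else if ψ i = 1 then deleteAt ψ i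
  else Function.update ψ i (ψ i - 1)

/-- Finitely many applications of operators `Δ_·^1` on weighted words. -/
def PReach1 : (ℕ → ℕ) → (ℕ → ℕ) → Prop :=
  Relation.ReflTransGen fun a b => ∃ i, b = pdelta1 a i

/-- Finitely many applications of operators `Δ_·^0` on weighted words. -/
def PReach0 : (ℕ → ℕ) → (ℕ → ℕ) → Prop :=
  Relation.ReflTransGen fun a b => ∃ i, b = pdelta0 a i

/-- Compatibility of an ordered pair of weighted words. -/
def CompatibleP (ζ ψ : ℕ → ℕ) : Prop :=
  ∃ (ζs ψs : ℕ → ℕ → ℕ) (l : ℕ → ℕ),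
    (∀ k, PReach1 ζ (ζs k)) ∧ (∀ k, PReach0 ψ (ψs k)) ∧
      (∀ k, Psi (ζs k)) ∧ (∀ k, Psi (ψs k)) ∧
      Tendsto ζs atTop (nhds l) ∧ Tendsto ψs atTop (nhds l)

/-! ### The oriented percolation process -/

/-- Oriented edges of the graph `G`: from `u` to `u + (0,1)` and from `u` to `u + (1,1)`. -/
def IsStep (u v : ℕ × ℕ) : Prop :=
  (v.1 = u.1 ∧ v.2 = u.2 + 1) ∨ (v.1 = u.1 + 1 ∧ v.2 = u.2 + 1)

/-- Open vertices of the configuration `ω_{ζ,ψ}`.  (Sequences are `0`-indexed in this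
formalization, so the entry of `ζ` at the paper's position `v₁ ≥ 1` is `ζ (v₁ - 1)`.) -/
def OpenV (ζ ψ : ℕ → ℕ) (v : ℕ × ℕ) : Prop :=
  v = (0, 0) ∨ (1 ≤ v.1 ∧ 1 ≤ v.2 ∧ ψ (v.2 - 1) ≤ ζ (v.1 - 1))

/-- Heavy vertices: `v₂ = 0`, or the row weight `ψ_{v₂}` is positive. -/
def Heavy (ψ : ℕ → ℕ) (v : ℕ × ℕ) : Prop := v.2 = 0 ∨ 1 ≤ ψ (v.2 - 1)

/-- `π 0, π 1, …, π n` is an open oriented path in `ω_{ζ,ψ}`. -/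
def IsOpenPath (ζ ψ : ℕ → ℕ) (π : ℕ → ℕ × ℕ) (n : ℕ) : Prop :=
  (∀ i < n, IsStep (π i) (π (i + 1))) ∧ ∀ i ≤ n, OpenV ζ ψ (π i)

/-- The path `π 0, …, π n` is permitted: any two distinct heavy vertices on it have
different first coordinates. -/
def IsPermitted (ψ : ℕ → ℕ) (π : ℕ → ℕ × ℕ) (n : ℕ) : Prop :=
  ∀ i ≤ n, ∀ j ≤ n, π i ≠ π j → Heavy ψ (π i) → Heavy ψ (π j) → (π i).1 ≠ (π j).1

/-- There is an infinite open permitted oriented path starting from the origin in the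
percolation configuration `ω_{ζ,ψ}`. -/
def InfOpenPermitted (ζ ψ : ℕ → ℕ) : Prop :=
  ∃ π : ℕ → ℕ × ℕ, π 0 = (0, 0) ∧ (∀ n, IsStep (π n) (π (n + 1))) ∧
    (∀ n, OpenV ζ ψ (π n)) ∧
    ∀ i j, π i ≠ π j → Heavy ψ (π i) → Heavy ψ (π j) → (π i).1 ≠ (π j).1

/-- `V_{⟨ζ,ψ⟩}(c)`: vertices in row `c` reachable from the origin by an open permitted
oriented path. -/
def Vset (ζ ψ : ℕ → ℕ) (c : ℕ) : Set (ℕ × ℕ) :=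
  {v | v.2 = c ∧ ∃ (π : ℕ → ℕ × ℕ) (n : ℕ), π 0 = (0, 0) ∧ π n = v ∧
    IsOpenPath ζ ψ π n ∧ IsPermitted ψ π n}

/-- The open oriented cluster of the origin in `ω_{ζ,ψ}`. -/
def ClusterO (ζ ψ : ℕ → ℕ) : Set (ℕ × ℕ) :=
  {v | ∃ (π : ℕ → ℕ × ℕ) (n : ℕ), π 0 = (0, 0) ∧ π n = v ∧ IsOpenPath ζ ψ π n}

/-- The horizontal slab `S_{[a,b]}`. -/
def Slab (a b : ℕ) : Set (ℕ × ℕ) := {v | a ≤ v.2 ∧ v.2 ≤ b}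

/-- The horizontal discrete segment in row `c` with endpoints `a` and `b`. -/
def HSeg (c a b : ℕ) : Set (ℕ × ℕ) := {v | v.2 = c ∧ a ≤ v.1 ∧ v.1 ≤ b}

/-- The shift `θ_m`. -/
def shiftSeq (m : ℕ) (ψ : ℕ → ℕ) : ℕ → ℕ := fun j => ψ (j + m)

/-- The hierarchical weighted word `ζ(L)`: the letter at the paper's position
`j ≥ 1` (Lean index `j - 1`) has weight `k` iff `L^k ∣ j` and `L^{k+1} ∤ j`. -/
noncomputable def zetaL (L : ℕ) : ℕ → ℕ := fun j => sSup {k | L ^ k ∣ j + 1}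

/-- Lean indices at which `ψ` has an entry `≥ k`. -/
def idxSet (ψ : ℕ → ℕ) (k : ℕ) : Set ℕ := {n | k ≤ ψ n}

/-- `i_k(ψ)`: the first (1-based, as in the paper) position at which `ψ` has
an entry `≥ k` (meaningful when `idxSet ψ k` is nonempty). -/
noncomputable def idx (ψ : ℕ → ℕ) (k : ℕ) : ℕ := sInf (idxSet ψ k) + 1

/-- Condition a) of being `M`-spaced. -/
def CondA (M : ℕ) (ψ : ℕ → ℕ) : Prop := ∀ i j : ℕ, i < j → M ^ min (ψ i) (ψ j) ≤ j - i

/-- `ψ ∈ Ψ_M^k` : `ψ` is `M`-spaced up to level `k`. -/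
def SpacedUpTo (M k : ℕ) (ψ : ℕ → ℕ) : Prop :=
  Psi ψ ∧ CondA M ψ ∧ ∀ j, 1 ≤ j → j ≤ k → (idxSet ψ j).Nonempty → M ^ j ≤ idx ψ j

/-- `ψ ∈ Ψ_M` : `ψ` is `M`-spaced. -/
def Spaced (M : ℕ) (ψ : ℕ → ℕ) : Prop :=
  Psi ψ ∧ CondA M ψ ∧ ∀ j, 1 ≤ j → (idxSet ψ j).Nonempty → M ^ j ≤ idx ψ j

/-! ### Discrete Hausdorff dimension (Barlow–Taylor) -/

/-- `ν_α(A, F)` with the normalizing diameter `dF` of `F` given explicitly; the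
infimum is over countable covers of `A ∩ F` by integer intervals `[x, y)`. -/
noncomputable def nuBT (α : ℝ) (A F : Set ℤ) (dF : ℝ) : ℝ≥0∞ :=
  (⨅ (B : ℕ → ℤ × ℤ) (_ : A ∩ F ⊆ ⋃ i, Set.Ico (B i).1 (B i).2),
      ∑' i, ENNReal.ofReal ((((B i).2 - (B i).1 : ℤ)) : ℝ) ^ α) /
    ENNReal.ofReal dF ^ α

/-- The annulus `I_n^{(r)}` (for `n ≥ 1`). -/
noncomputable def ringBT (r n : ℕ) : Set ℤ :=
  if n = 1 then Set.Ico (-(r : ℤ)) (r : ℤ)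
  else Set.Ico (-((r : ℤ) ^ n)) ((r : ℤ) ^ n) \ Set.Ico (-((r : ℤ) ^ (n - 1))) ((r : ℤ) ^ (n - 1))

/-- `m_α^{(r)}(A) = ∑_{n ≥ 1} ν_α(A, I_n^{(r)})`. -/
noncomputable def mBT (r : ℕ) (α : ℝ) (A : Set ℤ) : ℝ≥0∞ :=
  ∑' n : ℕ, nuBT α A (ringBT r (n + 1)) (2 * (r : ℝ) ^ (n + 1))

/-- The discrete (Barlow–Taylor) Hausdorff dimension of `A ⊆ ℤ`. -/
noncomputable def dimBT (r : ℕ) (A : Set ℤ) : ℝ :=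
  sInf {α : ℝ | 0 < α ∧ mBT r α A < ⊤}

/-- The set of zeroes of a binary sequence, viewed inside `ℤ` (at the paper's
positions `1, 2, …`). -/
def zeroSetZ (η : ℕ → Bool) : Set ℤ := {i : ℤ | ∃ n : ℕ, i = (n : ℤ) + 1 ∧ η n = false}

/-! ### The grouping construction -/

/-- A cluster together with its mass. -/
abbrev Clu : Type := Set ℕ × ℕ

/-- The set of (paper, i.e. 1-based) positions of the ones of `ξ`. -/
def Gamma (ξ : ℕ → Bool) : Set ℕ := {n | 1 ≤ n ∧ ξ (n - 1) = true}

/-- The span of a set: the smallest interval containing it. -/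
noncomputable def spanI (C : Set ℕ) : Set ℕ := Set.Icc (sInf C) (sSup C)

/-- Euclidean distance between two sets of integers. -/
noncomputable def cluDist (C D : Set ℕ) : ℕ := sInf {d | ∃ a ∈ C, ∃ b ∈ D, d = Nat.dist a b}

/-- Diameter of a set of integers. -/
noncomputable def sdiam (C : Set ℕ) : ℕ := sSup {d | ∃ a ∈ C, ∃ b ∈ C, d = Nat.dist a b}

/-- `C` lies entirely to the left of `D`. -/
def cluLT (C D : Set ℕ) : Prop := ∀ a ∈ C, ∀ b ∈ D, a < b

/-- `p` and `q` are adjacent clusters of the collection `B` (no cluster of `B` lies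
strictly between them) at distance `< t`. -/
def adjStep (B : Set Clu) (t : ℕ) (p q : Clu) : Prop :=
  p ∈ B ∧ q ∈ B ∧ cluDist p.1 q.1 < t ∧
    ((cluLT p.1 q.1 ∧ ∀ r ∈ B, ¬(cluLT p.1 r.1 ∧ cluLT r.1 q.1)) ∨
      (cluLT q.1 p.1 ∧ ∀ r ∈ B, ¬(cluLT q.1 r.1 ∧ cluLT r.1 p.1)))

/-- The maximal run (within the collection `B`, with gap threshold `t`) containing `p`. -/
def runOf (B : Set Clu) (t : ℕ) (p : Clu) : Set Clu :=
  {q ∈ B | Relation.ReflTransGen (adjStep B t) p q}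

/-- `R` is a maximal run of length `≥ 2` of clusters of `B` with gap threshold `t`. -/
def IsRun (B : Set Clu) (t : ℕ) (R : Set Clu) : Prop :=
  ∃ p ∈ B, R = runOf B t p ∧ ∃ q ∈ R, q ≠ p

/-- The level-`(k+1)` cluster created from a maximal `(k+1)`-run `R`: its point set is
`span(R) ∩ Γ`, and its mass is `∑ m(constituents) - k (n - 1)`. -/
noncomputable def runClu (Γ : Set ℕ) (k : ℕ) (R : Set Clu) : Clu :=
  (spanI (⋃ q ∈ R, q.1) ∩ Γ, (∑ᶠ q ∈ R, q.2) - k * (Nat.card R - 1))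

/-- One step of the grouping construction: from the partition `𝐂_k` to `𝐂_{k+1}`. -/
noncomputable def nextPart (Γ : Set ℕ) (M k : ℕ) (S : Set Clu) : Set Clu :=
  {c | ∃ R, IsRun {q ∈ S | k + 1 ≤ q.2} (M ^ (k + 1)) R ∧ c = runClu Γ k R} ∪
    {c ∈ S | ∀ R, IsRun {q ∈ S | k + 1 ≤ q.2} (M ^ (k + 1)) R →
      Disjoint c.1 (spanI (⋃ q ∈ R, q.1))}

/-- The partition `𝐂_k` of `Γ` into clusters with masses (grouping construction with
spacing parameter `M`). -/
noncomputable def parts (Γ : Set ℕ) (M : ℕ) : ℕ → Set Clu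
  | 0 => {c | ∃ x ∈ Γ, c = ({x}, 1)}
  | k + 1 => nextPart Γ M k (parts Γ M k)

/-- `c` is a cluster of level `ℓ`: it appears in `𝐂_ℓ` and in no earlier partition. -/
def IsLevelCluster (Γ : Set ℕ) (M ℓ : ℕ) (c : Clu) : Prop :=
  c ∈ parts Γ M ℓ ∧ ∀ k < ℓ, c ∉ parts Γ M k

/-- `κ(x) < ∞` : the levels of the clusters containing `x` are bounded. -/
def KappaFinite (Γ : Set ℕ) (M : ℕ) (x : ℕ) : Prop :=
  BddAbove {ℓ | ∃ c : Clu, IsLevelCluster Γ M ℓ c ∧ x ∈ c.1}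

/-- The event `Ξ(p)` on which the grouping construction is well set:
`κ(x) < ∞` for every `x ∈ Γ(ξ)`. -/
def GoodSeq (M : ℕ) (ξ : ℕ → Bool) : Prop := ∀ x ∈ Gamma ξ, KappaFinite (Gamma ξ) M x

/-- The collection `𝐂_∞` of maximal clusters: those that stay in `𝐂_k` forever. -/
def maxClusters (Γ : Set ℕ) (M : ℕ) : Set Clu :=
  {c | ∃ ℓ, ∀ k, ℓ ≤ k → c ∈ parts Γ M k}

/-- The defining condition of `χ(ξ) ≤ k` : every maximal cluster of mass `> k`
is at distance `≥ M^{mass}` from the origin.  (Positions are 1-based, so the distance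
from a cluster to `0` is its smallest element.) -/
def ChiCond (Γ : Set ℕ) (M k : ℕ) : Prop :=
  ∀ c ∈ maxClusters Γ M, k < c.2 → M ^ c.2 ≤ sInf c.1

/-- The maximal cluster containing a given point (junk if there is none). -/
noncomputable def maxCluOf (Γ : Set ℕ) (M : ℕ) (x : ℕ) : Clu :=
  letI := Classical.dec (∃ c : Clu, c ∈ maxClusters Γ M ∧ x ∈ c.1)
  if h : ∃ c : Clu, c ∈ maxClusters Γ M ∧ x ∈ c.1 then h.choose else (∅, 0)

/-- Enumeration of the maximal clusters in increasing order, together with the union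
of those already enumerated. -/
noncomputable def enumAux (Γ : Set ℕ) (M : ℕ) : ℕ → Clu × Set ℕ
  | 0 => (maxCluOf Γ M (sInf Γ), (maxCluOf Γ M (sInf Γ)).1)
  | j + 1 =>
    (maxCluOf Γ M (sInf (Γ \ (enumAux Γ M j).2)),
      (enumAux Γ M j).2 ∪ (maxCluOf Γ M (sInf (Γ \ (enumAux Γ M j).2))).1)

/-- The `j`-th maximal cluster `C_{∞,j}` (`j` is 0-based here). -/
noncomputable def enumClu (Γ : Set ℕ) (M : ℕ) (j : ℕ) : Clu := (enumAux Γ M j).1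

/-- The start-point `x̂_j` of the `j`-th maximal cluster (`j` is 0-based here). -/
noncomputable def hatx (Γ : Set ℕ) (M : ℕ) : ℕ → ℕ
  | 0 => sInf Γ
  | j + 1 => sInf (Γ \ (enumAux Γ M j).2)

/-- The (1-based) position `x̂_j - ∑_{t<j} diam(C_{∞,t})` at which the entry of the
`j`-th maximal cluster sits in the weighted word `ψ^ξ`. -/
noncomputable def cluPos (Γ : Set ℕ) (M : ℕ) (j : ℕ) : ℕ :=
  hatx Γ M j - ∑ t ∈ Finset.range j, sdiam (enumClu Γ M t).1

/-- The weighted word `ψ^ξ` associated to `ξ` by the grouping construction. -/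
noncomputable def psiXi (M : ℕ) (ξ : ℕ → Bool) : ℕ → ℕ := fun i =>
  letI := Classical.dec (∃ j : ℕ, i + 1 = cluPos (Gamma ξ) M j)
  if h : ∃ j : ℕ, i + 1 = cluPos (Gamma ξ) M j then (enumClu (Gamma ξ) M h.choose).2 else 0

/-- `ψ ⪯_M ζ`. -/
def PrecM (M : ℕ) (ψ ζ : ℕ → ℕ) : Prop :=
  ∀ j, (ψ j = 0 ↔ ζ j = 0) ∧ (1 ≤ ψ j → ψ j ≤ ζ j ∧ ζ j ≤ 3 * M ^ (ψ j - 1))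

/-- The set `∪_i (span(C_{∞,i}) \ C_{∞,i})` of points to be deleted. -/
def Dset (Γ : Set ℕ) (M : ℕ) : Set ℕ := ⋃ c ∈ maxClusters Γ M, spanI c.1 \ c.1

/-- `j_n(ξ)` : the `n`-th (0-based) element of `Dset`, shifted by `n` to account for
the previous deletions (this is the paper's `j_{n+1}`, a 1-based position). -/
noncomputable def jseq (Γ : Set ℕ) (M : ℕ) (n : ℕ) : ℕ := Nat.nth (· ∈ Dset Γ M) n - n

/-- The iterates `ξ^{(n)}` obtained by successively deleting the zeroes of `ξ`
lying inside spans of maximal clusters. -/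
noncomputable def xiIter (M : ℕ) (ξ : ℕ → Bool) : ℕ → ℕ → Bool
  | 0 => ξ
  | n + 1 => delta0 (xiIter M ξ n) (jseq (Gamma ξ) M n - 1)

/-- The fattened hierarchical weighted word `ζ̃(L)` (with `M = 3(L+1)`). -/
noncomputable def tzeta (L : ℕ) : ℕ → ℕ := fun j =>
  if zetaL L j = 0 then 0 else 3 * (3 * (L + 1)) ^ (zetaL L j - 1)

/-- `|A ∩ [0, n)|` for `A ⊆ ℕ`. -/
noncomputable def massCount (A : Set ℕ) (n : ℕ) : ℕ := Nat.card {a : ℕ | a ∈ A ∧ a < n}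


/-! ### Auxiliary development for `statement_0` -/

namespace BW

/-- capacity sequence: length of the `t`-th run of ones of `η`. -/
def runA (t : ℕ) : ℕ := 2 * Nat.log 2 (t + 2) + 6

/-- positions of the zeroes of the constructed `η`. -/
def zp : ℕ → ℕ
  | 0 => runA 0
  | k + 1 => zp k + runA (k + 1) + 1

lemma log_ge_one (t : ℕ) : 1 ≤ Nat.log 2 (t + 2) := by
  have h := (Nat.le_log_iff_pow_le (b := 2) one_lt_two (x := 1) (y := t + 2) (by omega)).2
  exact h (by omega)

lemma runA_ge (t : ℕ) : 8 ≤ runA t := by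
  have := log_ge_one t; unfold runA; omega

lemma zp_succ (k : ℕ) : zp (k + 1) = zp k + runA (k + 1) + 1 := rfl

lemma zp_strictMono : StrictMono zp := by
  apply strictMono_nat_of_lt_succ
  intro k; rw [zp_succ]; have := runA_ge (k+1); omega

lemma le_zp (k : ℕ) : k ≤ zp k := zp_strictMono.le_apply

lemma zp_zero : zp 0 = 8 := by
  show runA 0 = 8
  unfold runA
  have h1 : Nat.log 2 2 = 1 := by
    have := Nat.log_pow (b := 2) one_lt_two 1
    simpa using this
  simp [h1]

noncomputable def etaSeq : ℕ → Bool := fun n =>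
  letI := Classical.dec (∃ k, zp k = n)
  if ∃ k, zp k = n then false else true

lemma etaSeq_zp (k : ℕ) : etaSeq (zp k) = false := by
  unfold etaSeq
  split
  · rfl
  · next h => exact absurd ⟨k, rfl⟩ h

lemma etaSeq_true {n : ℕ} (h : ∀ k, zp k ≠ n) : etaSeq n = true := by
  unfold etaSeq
  split
  · next h2 => obtain ⟨k, hk⟩ := h2; exact absurd hk (h k)
  · rfl

lemma etaSeq_true_between {t n : ℕ} (hlow : ∀ k, k < t → zp k < n) (hhigh : n < zp t) :
    etaSeq n = true := by
  apply etaSeq_true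
  intro k hk
  rcases lt_or_ge k t with h | h
  · exact (hlow k h).ne hk
  · exact (lt_of_lt_of_le hhigh (zp_strictMono.monotone h)).ne' hk

/-- `zp` is `≈ 2 log`-dense. -/
lemma zdense (u : ℕ) : ∃ k, u ≤ zp k ∧ zp k ≤ u + 2 * Nat.log 2 (u + 2) + 8 := by
  classical
  have hex : ∃ k, u ≤ zp k := ⟨u, le_zp u⟩
  refine ⟨Nat.find hex, Nat.find_spec hex, ?_⟩
  rcases Nat.eq_zero_or_pos (Nat.find hex) with h | h
  · rw [h, zp_zero]; omega
  · obtain ⟨k', hk'⟩ : ∃ k', Nat.find hex = k' + 1 := ⟨Nat.find hex - 1, by omega⟩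
    have h2 : zp k' < u := by
      have := Nat.find_min hex (m := k') (by omega)
      omega
    have h3 : k' + 1 ≤ u := by have := le_zp k'; omega
    have h4 : runA (k' + 1) ≤ 2 * Nat.log 2 (u + 2) + 6 := by
      unfold runA
      have : Nat.log 2 (k' + 1 + 2) ≤ Nat.log 2 (u + 2) := Nat.log_mono_right (by omega)
      omega
    rw [hk', zp_succ]
    omega

/-! ### arithmetic for the capacity bound -/

lemma two_pow_aux (a : ℕ) : 2 * a + 9 ≤ 11 * 2 ^ a := by
  have h1 : a < 2 ^ a := Nat.lt_two_pow_self
  have h2 : 1 ≤ 2 ^ a := Nat.one_le_two_pow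
  nlinarith

lemma cap_key {L : ℕ} (hL : 7 ≤ L) : (L + 1) * 2 ^ ((L - 5) / 2) + 2 ≤ 2 ^ L := by
  set a := (L - 5) / 2 with ha
  have h2a : 2 * a ≤ L - 5 := by omega
  have hL6 : L ≤ 2 * a + 6 := by omega
  have h1 : 1 ≤ 2 ^ a := Nat.one_le_two_pow
  calc (L + 1) * 2 ^ a + 2 ≤ (2 * a + 7) * 2 ^ a + 2 * 2 ^ a := by
        have := Nat.mul_le_mul_right (2 ^ a) (show L + 1 ≤ 2 * a + 7 by omega)
        omega
    _ = (2 * a + 9) * 2 ^ a := by ring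
    _ ≤ (11 * 2 ^ a) * 2 ^ a := Nat.mul_le_mul_right _ (two_pow_aux a)
    _ ≤ (32 * 2 ^ a) * 2 ^ a := Nat.mul_le_mul_right _ (Nat.mul_le_mul_right _ (by norm_num))
    _ = 2 ^ (2 * a + 5) := by rw [show 2 * a + 5 = a + a + 5 by ring, pow_add, pow_add]; ring
    _ ≤ 2 ^ L := Nat.pow_le_pow_right (by norm_num) (by omega)

lemma cap_arith {s t : ℕ} (h : s / (Nat.log 2 (s + 2) + 1) ≤ t) :
    Nat.log 2 (s + 2) ≤ runA t := by
  set L := Nat.log 2 (s + 2) with hL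
  rcases le_or_gt L 6 with hL6 | hL7
  · have := runA_ge t; omega
  · set a := (L - 5) / 2 with ha
    have key := cap_key (L := L) (by omega)
    have hs : 2 ^ L ≤ s + 2 := Nat.pow_log_le_self 2 (by omega)
    have h1 : 2 ^ a * (L + 1) ≤ s := by
      have := key; nlinarith [key, hs]
    have h2 : 2 ^ a ≤ s / (L + 1) := (Nat.le_div_iff_mul_le (by omega)).2 h1
    have h3 : 2 ^ a ≤ t + 2 := by omega
    have h4 : a ≤ Nat.log 2 (t + 2) := (Nat.le_log_iff_pow_le one_lt_two (by omega)).2 h3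
    unfold runA
    omega


/-- the window condition on `ξ` -/
def Wind (ξ : ℕ → Bool) : Prop :=
  ∀ s, ∃ i, s ≤ i ∧ i ≤ s + Nat.log 2 (s + 2) ∧ ξ i = false

/-- number of zeroes of `ξ` below `m` -/
def tcount (ξ : ℕ → Bool) (m : ℕ) : ℕ :=
  ((Finset.range m).filter (fun j => ξ j = false)).card

lemma tcount_succ_false {ξ : ℕ → Bool} {m : ℕ} (h : ξ m = false) :
    tcount ξ (m + 1) = tcount ξ m + 1 := by
  unfold tcount
  rw [Finset.range_add_one, Finset.filter_insert, if_pos h,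
    Finset.card_insert_of_notMem (by simp)]

lemma tcount_succ_true {ξ : ℕ → Bool} {m : ℕ} (h : ξ m = true) :
    tcount ξ (m + 1) = tcount ξ m := by
  unfold tcount
  rw [Finset.range_add_one, Finset.filter_insert, if_neg (by simp [h])]

lemma tcount_pos {ξ : ℕ → Bool} (h0 : ξ 0 = false) {m : ℕ} (hm : 1 ≤ m) :
    1 ≤ tcount ξ m := by
  have : (0 : ℕ) ∈ (Finset.range m).filter (fun j => ξ j = false) := by
    simp only [Finset.mem_filter, Finset.mem_range, h0]
    exact ⟨hm, trivial⟩
  exact Finset.card_pos.2 ⟨0, this⟩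

lemma tcount_congr {ξ : ℕ → Bool} {s m : ℕ} (hsm : s ≤ m)
    (h : ∀ j, s ≤ j → j < m → ξ j = true) : tcount ξ s = tcount ξ m := by
  induction m, hsm using Nat.le_induction with
  | base => rfl
  | succ n hn ih =>
    rw [tcount_succ_true (h n hn (by omega)), ih (fun j h1 h2 => h j h1 (by omega))]

lemma wind_zero_count {ξ : ℕ → Bool} (hw : Wind ξ) (s : ℕ) :
    s / (Nat.log 2 (s + 2) + 1) ≤ tcount ξ s := by
  classical
  set L := Nat.log 2 (s + 2) with hL
  set q := s / (L + 1) with hq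
  have hch : ∀ j, j < q → ∃ i, j * (L + 1) ≤ i ∧ i ≤ j * (L + 1) + L ∧ ξ i = false := by
    intro j hj
    obtain ⟨i, h1, h2, h3⟩ := hw (j * (L + 1))
    have hjs : j * (L + 1) ≤ s := by
      calc j * (L + 1) ≤ q * (L + 1) := Nat.mul_le_mul_right _ (le_of_lt hj)
        _ ≤ s := Nat.div_mul_le_self s (L + 1)
    have hlog : Nat.log 2 (j * (L + 1) + 2) ≤ L := Nat.log_mono_right (by omega)
    exact ⟨i, h1, by omega, h3⟩
  choose f hf1 hf2 hf3 using hch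
  set g : ℕ → ℕ := fun j => if h : j < q then f j h else 0 with hg
  have hcard : q ≤ tcount ξ s := by
    have : (Finset.range q).card ≤ ((Finset.range s).filter (fun j => ξ j = false)).card := by
      apply Finset.card_le_card_of_injOn g
      · intro j hj
        rw [Finset.mem_coe, Finset.mem_range] at hj
        simp only [hg, dif_pos hj]
        rw [Finset.mem_coe, Finset.mem_filter, Finset.mem_range]
        refine ⟨?_, hf3 j hj⟩
        have h1 := hf2 j hj
        have h2 : (j + 1) * (L + 1) ≤ q * (L + 1) := Nat.mul_le_mul_right _ (by omega)
        have h3 : q * (L + 1) ≤ s := Nat.div_mul_le_self s (L + 1)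
        have h4 : (j + 1) * (L + 1) = j * (L + 1) + (L + 1) := by ring
        omega
      · intro j hj j' hj' hEq
        rw [Finset.mem_coe, Finset.mem_range] at hj hj'
        simp only [hg, dif_pos hj, dif_pos hj'] at hEq
        have a1 := hf1 j hj; have a2 := hf2 j hj
        have b1 := hf1 j' hj'; have b2 := hf2 j' hj'
        rw [hEq] at a1 a2
        by_contra hne
        rcases lt_or_gt_of_ne hne with h | h
        · have : (j + 1) * (L + 1) ≤ j' * (L + 1) := Nat.mul_le_mul_right _ (by omega)
          have h4 : (j + 1) * (L + 1) = j * (L + 1) + (L + 1) := by ring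
          omega
        · have : (j' + 1) * (L + 1) ≤ j * (L + 1) := Nat.mul_le_mul_right _ (by omega)
          have h4 : (j' + 1) * (L + 1) = j' * (L + 1) + (L + 1) := by ring
          omega
    simpa [tcount] using this
  exact hcard

/-- capacity bound on runs of ones of `ξ`. -/
lemma run_cap {ξ : ℕ → Bool} (hw : Wind ξ) {s b : ℕ}
    (hrun : ∀ i, s ≤ i → i < s + b → ξ i = true) :
    b ≤ runA (tcount ξ s) := by
  have hbL : b ≤ Nat.log 2 (s + 2) := by
    by_contra hc
    push_neg at hc
    obtain ⟨i, h1, h2, h3⟩ := hw s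
    have : ξ i = true := hrun i h1 (by omega)
    rw [this] at h3; exact Bool.noConfusion h3
  exact le_trans hbL (cap_arith (wind_zero_count hw s))

/-! ### the deletion construction -/

lemma del_run (η' : ℕ → Bool) (m Δ : ℕ) (h : ∀ i, i < Δ → η' (m + i) = true) :
    ∃ η'', Reach1 η' η'' ∧ (∀ j, j < m → η'' j = η' j) ∧
      (∀ j, η'' (m + j) = η' (m + Δ + j)) := by
  induction Δ generalizing η' with
  | zero => exact ⟨η', Relation.ReflTransGen.refl, fun j _ => rfl, fun j => rfl⟩
  | succ Δ ih =>
    have h0 : η' m = true := by simpa using h 0 (by omega)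
    have he : delta1 η' m = deleteAt η' m := by unfold delta1; rw [if_pos h0]
    have h1 : ∀ i, i < Δ → (delta1 η' m) (m + i) = true := by
      intro i hi
      rw [he]
      show (if m + i < m then η' (m + i) else η' (m + i + 1)) = true
      rw [if_neg (by omega)]
      have := h (i + 1) (by omega)
      rwa [show m + (i + 1) = m + i + 1 by omega] at this
    obtain ⟨η'', hr, hpre, htail⟩ := ih (delta1 η' m) h1
    refine ⟨η'', Relation.ReflTransGen.head ⟨m, rfl⟩ hr, ?_, ?_⟩
    · intro j hj
      rw [hpre j hj, he]
      show (if j < m then η' j else η' (j + 1)) = η' j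
      rw [if_pos hj]
    · intro j
      rw [htail j, he]
      show (if m + Δ + j < m then η' (m + Δ + j) else η' (m + Δ + j + 1)) = η' (m + (Δ + 1) + j)
      rw [if_neg (by omega)]
      congr 1
      omega

/-- position of the last zero of `ξ` below `m` -/
def lastz (ξ : ℕ → Bool) (m : ℕ) : ℕ :=
  Nat.findGreatest (fun j => ξ j = false) (m - 1)

def oz (ξ : ℕ → Bool) (m : ℕ) : ℕ := m - 1 - lastz ξ m

noncomputable def dshift (ξ : ℕ → Bool) (m : ℕ) : ℕ :=
  if m = 0 then 0 else zp (tcount ξ m - 1) + 1 + oz ξ m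

lemma lastz_le {ξ : ℕ → Bool} (m : ℕ) : lastz ξ m ≤ m - 1 := Nat.findGreatest_le _

lemma lastz_spec {ξ : ℕ → Bool} (h0 : ξ 0 = false) (m : ℕ) : ξ (lastz ξ m) = false := by
  unfold lastz
  exact Nat.findGreatest_spec (P := fun j => ξ j = false) (Nat.zero_le _) h0

lemma lastz_greatest {ξ : ℕ → Bool} {m j : ℕ} (h1 : lastz ξ m < j) (h2 : j ≤ m - 1) :
    ξ j = true := by
  have := Nat.findGreatest_is_greatest (P := fun j => ξ j = false)
    (n := m - 1) (k := j) h1 h2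
  revert this
  cases hx : ξ j <;> simp [hx]

lemma lastz_succ_true {ξ : ℕ → Bool} {m : ℕ} (h0 : ξ 0 = false) (hm : 1 ≤ m)
    (h : ξ m = true) : lastz ξ (m + 1) = lastz ξ m := by
  unfold lastz
  rw [show m + 1 - 1 = (m - 1) + 1 by omega, Nat.findGreatest_succ,
    if_neg (by rw [show m - 1 + 1 = m by omega]; simp [h])]

lemma lastz_succ_false {ξ : ℕ → Bool} {m : ℕ} (h : ξ m = false) :
    lastz ξ (m + 1) = m := by
  unfold lastz
  rcases Nat.eq_zero_or_pos m with hm | hm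
  · subst hm; simp
  · rw [show m + 1 - 1 = (m - 1) + 1 by omega, Nat.findGreatest_succ,
      if_pos (by rw [show m - 1 + 1 = m by omega]; exact h), show m - 1 + 1 = m by omega]

/-- the main invariant: the prefix of `ξ` can be realized by deleting ones of `η`. -/
lemma main_inv {ξ : ℕ → Bool} (h0 : ξ 0 = false) (hw : Wind ξ) (m : ℕ) :
    ∃ η', Reach1 etaSeq η' ∧ (∀ j, j < m → η' j = ξ j) ∧
      (∀ j, η' (m + j) = etaSeq (dshift ξ m + j)) := by
  induction m with
  | zero =>
    refine ⟨etaSeq, Relation.ReflTransGen.refl, fun j hj => absurd hj (by omega), fun j => ?_⟩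
    simp [dshift]
  | succ m IH =>
    obtain ⟨η', hr, hpre, htail⟩ := IH
    set t := tcount ξ m with ht
    set o := oz ξ m with ho
    cases hm : ξ m with
    | true =>
      -- no deletion needed
      have hm1 : 1 ≤ m := by
        rcases Nat.eq_zero_or_pos m with h | h
        · rw [h] at hm; rw [h0] at hm; exact Bool.noConfusion hm
        · exact h
      have htpos : 1 ≤ t := tcount_pos h0 hm1
      have hlz := lastz_le (ξ := ξ) m
      have hlzt : ∀ j, lastz ξ m < j → j ≤ m → ξ j = true := by
        intro j h1 h2
        rcases eq_or_lt_of_le h2 with rfl | h3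
        · exact hm
        · exact lastz_greatest h1 (by omega)
      -- run from s := lastz+1 to m has length o+1
      set s := lastz ξ m + 1 with hs
      have hrun : ∀ i, s ≤ i → i < s + (o + 1) → ξ i = true := by
        intro i h1 h2
        exact hlzt i (by omega) (by simp only [ho, oz] at h2 ⊢; omega)
      have hts : tcount ξ s = t := by
        rw [ht]
        exact tcount_congr (by omega) (fun j h1 h2 => hlzt j (by omega) (by omega))
      have hcap : o + 1 ≤ runA t := by
        rw [← hts]; exact run_cap hw hrun
      have hdlt : dshift ξ m + 1 ≤ zp t ∧ zp (t - 1) < dshift ξ m := by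
        have hz := zp_succ (t - 1)
        rw [show t - 1 + 1 = t by omega] at hz
        unfold dshift
        rw [if_neg (by omega)]
        constructor
        · rw [← ho, ← ht]; omega
        · rw [← ho, ← ht]; omega
      have hval : etaSeq (dshift ξ m) = true := by
        apply etaSeq_true_between (t := t)
        · intro k hk
          exact lt_of_le_of_lt (zp_strictMono.monotone (by omega : k ≤ t - 1)) hdlt.2
        · omega
      refine ⟨η', hr, ?_, ?_⟩
      · intro j hj
        rcases lt_or_ge j m with h | h
        · exact hpre j h
        · have hjm : j = m := by omega
          rw [hjm]
          have := htail 0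
          rw [show m + 0 = m by omega] at this
          rw [this, show dshift ξ m + 0 = dshift ξ m by omega, hval, hm]
      · intro j
        have := htail (1 + j)
        rw [show m + (1 + j) = m + 1 + j by omega] at this
        rw [this]
        congr 1
        -- dshift ξ (m+1) = dshift ξ m + 1 + j ... goal: dshift ξ m + (1+j) = dshift ξ (m+1) + j
        have e1 : tcount ξ (m + 1) = t := by rw [ht]; exact (tcount_succ_true hm)
        have e2 : lastz ξ (m + 1) = lastz ξ m := lastz_succ_true h0 hm1 hm
        have e3 : oz ξ (m + 1) = o + 1 := by
          unfold oz
          rw [e2, ho]; unfold oz; omega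
        unfold dshift
        rw [if_neg (by omega), if_neg (by omega), e1, e3, ← ht, ← ho]
        omega
    | false =>
      set T := zp t with hT
      have hbounds : dshift ξ m ≤ T ∧ ∀ p, dshift ξ m ≤ p → p < T → etaSeq p = true := by
        rcases Nat.eq_zero_or_pos m with hm0 | hm1
        · have ht0 : t = 0 := by rw [ht, hm0]; rfl
          have hd0 : dshift ξ m = 0 := by unfold dshift; rw [if_pos hm0]
          refine ⟨by omega, ?_⟩
          intro p hp1 hp2
          apply etaSeq_true_between (t := t)
          · intro k hk; rw [ht0] at hk; omega
          · exact hp2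
        · have htpos : 1 ≤ t := tcount_pos h0 hm1
          have hz := zp_succ (t - 1)
          rw [show t - 1 + 1 = t by omega] at hz
          have hlz := lastz_le (ξ := ξ) m
          have hcap : o ≤ runA t := by
            rcases Nat.eq_zero_or_pos o with ho0 | ho1
            · have := runA_ge t; omega
            · set s := lastz ξ m + 1 with hs
              have hoz : o = m - 1 - lastz ξ m := by rw [ho]; rfl
              have hrun : ∀ i, s ≤ i → i < s + o → ξ i = true := by
                intro i h1 h2
                exact lastz_greatest (m := m) (by omega) (by omega)
              have hts : tcount ξ s = t := by
                rw [ht]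
                exact tcount_congr (by omega)
                  (fun j h1 h2 => lastz_greatest (m := m) (by omega) (by omega))
              rw [← hts]; exact run_cap hw hrun
          have hd : dshift ξ m = zp (t - 1) + 1 + o := by
            unfold dshift; rw [if_neg (by omega), ← ht, ← ho]
          constructor
          · rw [hd]; omega
          · intro p hp1 hp2
            apply etaSeq_true_between (t := t)
            · intro k hk
              calc zp k ≤ zp (t - 1) := zp_strictMono.monotone (by omega)
                _ < p := by rw [hd] at hp1; omega
            · exact hp2
      obtain ⟨η'', hr2, hpre2, htail2⟩ := del_run η' m (T - dshift ξ m) (by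
        intro i hi
        rw [htail i]
        exact hbounds.2 _ (by omega) (by omega))
      have hb1 := hbounds.1
      refine ⟨η'', hr.trans hr2, ?_, ?_⟩
      · intro j hj
        rcases lt_or_ge j m with h | h
        · rw [hpre2 j h, hpre j h]
        · have hjm : j = m := by omega
          rw [hjm]
          have h2 := htail2 0
          rw [show m + 0 = m by omega,
            show m + (T - dshift ξ m) + 0 = m + (T - dshift ξ m + 0) by omega] at h2
          have h3 := htail (T - dshift ξ m + 0)
          rw [h2, h3, show dshift ξ m + (T - dshift ξ m + 0) = T by omega, hT, etaSeq_zp, hm]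
      · intro j
        have h2 := htail2 (1 + j)
        rw [show m + (1 + j) = m + 1 + j by omega] at h2
        have h3 := htail (T - dshift ξ m + (1 + j))
        rw [h2, show m + (T - dshift ξ m) + (1 + j) = m + (T - dshift ξ m + (1 + j)) by omega, h3]
        congr 1
        have e1 : tcount ξ (m + 1) = t + 1 := by rw [ht]; exact tcount_succ_false hm
        have e2 : oz ξ (m + 1) = 0 := by
          unfold oz; rw [lastz_succ_false hm]; omega
        have e4 : dshift ξ (m + 1) = T + 1 := by
          unfold dshift
          rw [if_neg (show ¬(m + 1 = 0) by omega), e1, e2, show t + 1 - 1 = t by omega, ← hT]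
        rw [e4]
        omega

/-- compatibility on the good event -/
lemma compat_of_E {ξ : ℕ → Bool} (h0 : ξ 0 = false) (hw : Wind ξ) : Compatible etaSeq ξ := by
  choose η' hr hpre htail using main_inv h0 hw
  refine ⟨η', fun _ => ξ, ξ, hr, fun _ => Relation.ReflTransGen.refl, ?_, tendsto_const_nhds⟩
  rw [tendsto_pi_nhds]
  intro j
  have hev : (fun _ : ℕ => ξ j) =ᶠ[atTop] (fun k => η' k j) :=
    Filter.eventually_atTop.2 ⟨j + 1, fun k hk => (hpre k j (by omega)).symm⟩
  exact Filter.Tendsto.congr' hev tendsto_const_nhds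


/-! ### telescoping sum -/

lemma partial_real (N : ℕ) :
    ∑ s ∈ Finset.range N, ((((s + 1) * (s + 2) : ℕ) : ℝ))⁻¹ = 1 - (((N + 1 : ℕ) : ℝ))⁻¹ := by
  induction N with
  | zero => simp
  | succ N ih =>
    rw [Finset.sum_range_succ, ih]
    push_cast
    have h1 : ((N : ℝ) + 1) ≠ 0 := by positivity
    have h2 : ((N : ℝ) + 2) ≠ 0 := by positivity
    field_simp
    ring

lemma telescope_hasSum :
    HasSum (fun s : ℕ => ((((s + 1) * (s + 2) : ℕ) : ℝ))⁻¹) 1 := by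
  rw [hasSum_iff_tendsto_nat_of_nonneg (by intro i; positivity)]
  have h1 : (fun n : ℕ => ∑ i ∈ Finset.range n, ((((i + 1) * (i + 2) : ℕ) : ℝ))⁻¹)
      = fun n : ℕ => 1 - (((n + 1 : ℕ) : ℝ))⁻¹ := funext partial_real
  rw [h1]
  have h2 : Tendsto (fun n : ℕ => (((n + 1 : ℕ) : ℝ))⁻¹) atTop (nhds 0) := by
    have := tendsto_one_div_add_atTop_nhds_zero_nat (𝕜 := ℝ)
    simpa [one_div] using this
  simpa using (tendsto_const_nhds (x := (1:ℝ)) (f := atTop)).sub h2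

lemma telescope_sum_le : ∑' s : ℕ, ((((s + 1) * (s + 2) : ℕ) : ℝ≥0∞))⁻¹ ≤ 1 := by
  have hpt : ∀ s : ℕ, ((((s + 1) * (s + 2) : ℕ) : ℝ≥0∞))⁻¹
      = ENNReal.ofReal (((((s + 1) * (s + 2) : ℕ) : ℝ))⁻¹) := by
    intro s
    rw [ENNReal.ofReal_inv_of_pos (by positivity), ENNReal.ofReal_natCast]
  rw [tsum_congr hpt, ← ENNReal.ofReal_tsum_of_nonneg (fun s => by positivity)
    telescope_hasSum.summable, telescope_hasSum.tsum_eq]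
  simp

/-- per-window probability bound -/
lemma pow_log_bound {q : ℝ≥0∞} (hq : q ≤ 8⁻¹) (s : ℕ) :
    q ^ (Nat.log 2 (s + 2)) ≤ 8 * ((((s + 1) * (s + 2) : ℕ) : ℝ≥0∞))⁻¹ := by
  set L := Nat.log 2 (s + 2) with hL
  have h2 : s + 2 ≤ 2 ^ (L + 1) := le_of_lt (Nat.lt_pow_succ_log_self one_lt_two _)
  have h1 : ((s + 1) * (s + 2) : ℕ) ≤ 8 * 8 ^ L := by
    have h3 : (s + 1) * (s + 2) ≤ 2 ^ (L + 1) * 2 ^ (L + 1) :=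
      Nat.mul_le_mul (by omega) h2
    have h4 : 2 ^ (L + 1) * 2 ^ (L + 1) = 4 * 4 ^ L := by
      rw [pow_succ]
      have : (4 : ℕ) ^ L = 2 ^ L * 2 ^ L := by
        rw [show (4 : ℕ) = 2 * 2 by norm_num, mul_pow]
      rw [this]; ring
    have h5 : (4 : ℕ) ^ L ≤ 8 ^ L := Nat.pow_le_pow_left (by norm_num) L
    calc (s + 1) * (s + 2) ≤ 4 * 4 ^ L := by omega
      _ ≤ 8 * 8 ^ L := by
          have := Nat.mul_le_mul (show (4:ℕ) ≤ 8 by norm_num) h5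
          omega
  calc q ^ L ≤ (8⁻¹ : ℝ≥0∞) ^ L := pow_le_pow_left' hq L
    _ = ((8 : ℝ≥0∞) ^ L)⁻¹ := by rw [ENNReal.inv_pow]
    _ = 8 * ((8 * 8 ^ L : ℝ≥0∞))⁻¹ := by
        rw [ENNReal.mul_inv (Or.inl (by norm_num)) (Or.inl (by norm_num))]
        rw [← mul_assoc, ENNReal.mul_inv_cancel (by norm_num) (by norm_num), one_mul]
    _ ≤ 8 * ((((s + 1) * (s + 2) : ℕ) : ℝ≥0∞))⁻¹ := by
        apply mul_le_mul_right
        apply ENNReal.inv_le_inv.2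
        calc ((((s + 1) * (s + 2) : ℕ) : ℝ≥0∞)) ≤ ((8 * 8 ^ L : ℕ) : ℝ≥0∞) := by
              exact_mod_cast Nat.cast_le.2 h1
          _ = (8 * 8 ^ L : ℝ≥0∞) := by push_cast; ring
    
/-- The good event has positive probability. -/
lemma mu_E_pos {μ : Measure (ℕ → Bool)} {p : ℝ} (hp0 : 0 < p) (hp1 : p < 1 / 100)
    (hB : IsBernoulliProduct μ p) : 0 < μ {ξ | ξ 0 = false ∧ Wind ξ} := by
  haveI := hB.1
  set q := ENNReal.ofReal p with hqdef
  have hq8 : q ≤ 8⁻¹ := by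
    rw [hqdef, show (8⁻¹ : ℝ≥0∞) = ENNReal.ofReal (8⁻¹ : ℝ) by
      rw [ENNReal.ofReal_inv_of_pos (by norm_num)]; norm_num]
    exact ENNReal.ofReal_le_ofReal (by linarith)
  -- bad events
  have hbad0 : μ {ξ : ℕ → Bool | ξ 0 = true} = q := by
    have h := hB.2 {0} (fun _ => true)
    simpa using h
  have hbads : ∀ s : ℕ, μ {ξ : ℕ → Bool | ∀ i ∈ Finset.Icc s (s + Nat.log 2 (s + 2)), ξ i = true}
      = q ^ (Nat.log 2 (s + 2) + 1) := by
    intro s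
    rw [hB.2]
    simp only [if_pos]
    rw [Finset.prod_const, Nat.card_Icc]
    congr 1
    omega
  -- inclusion of the complement
  have hincl : {ξ : ℕ → Bool | ξ 0 = false ∧ Wind ξ}ᶜ ⊆
      {ξ : ℕ → Bool | ξ 0 = true} ∪
        ⋃ s : ℕ, {ξ : ℕ → Bool | ∀ i ∈ Finset.Icc s (s + Nat.log 2 (s + 2)), ξ i = true} := by
    intro ξ hξ
    simp only [Set.mem_compl_iff, Set.mem_setOf_eq, not_and_or] at hξ
    rcases hξ with h | h
    · left
      simp only [Set.mem_setOf_eq]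
      cases hx : ξ 0
      · exact absurd hx h
      · rfl
    · right
      rw [Wind] at h
      push_neg at h
      obtain ⟨s, hs⟩ := h
      refine Set.mem_iUnion.2 ⟨s, ?_⟩
      simp only [Set.mem_setOf_eq]
      intro i hi
      rw [Finset.mem_Icc] at hi
      have := hs i hi.1 hi.2
      cases hx : ξ i
      · exact absurd hx this
      · rfl
  -- measure bound
  have hsum : μ ({ξ : ℕ → Bool | ξ 0 = false ∧ Wind ξ}ᶜ) ≤ 9 * q := by
    calc μ ({ξ : ℕ → Bool | ξ 0 = false ∧ Wind ξ}ᶜ) ≤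
        μ ({ξ : ℕ → Bool | ξ 0 = true} ∪
          ⋃ s : ℕ, {ξ : ℕ → Bool | ∀ i ∈ Finset.Icc s (s + Nat.log 2 (s + 2)), ξ i = true}) :=
          measure_mono hincl
      _ ≤ μ {ξ : ℕ → Bool | ξ 0 = true} +
          μ (⋃ s : ℕ, {ξ : ℕ → Bool | ∀ i ∈ Finset.Icc s (s + Nat.log 2 (s + 2)), ξ i = true}) :=
          measure_union_le _ _
      _ ≤ q + ∑' s : ℕ, μ {ξ : ℕ → Bool | ∀ i ∈ Finset.Icc s (s + Nat.log 2 (s + 2)), ξ i = true} := by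
          rw [hbad0]
          exact add_le_add_right (measure_iUnion_le _) _
      _ = q + ∑' s : ℕ, q ^ (Nat.log 2 (s + 2) + 1) := by
          congr 1
          exact tsum_congr hbads
      _ ≤ q + ∑' s : ℕ, q * (8 * ((((s + 1) * (s + 2) : ℕ) : ℝ≥0∞))⁻¹) := by
          apply add_le_add_right
          apply Summable.tsum_le_tsum _ ENNReal.summable ENNReal.summable
          intro s
          rw [pow_succ, mul_comm]
          exact mul_le_mul_right (pow_log_bound hq8 s) q
      _ = q + q * 8 * ∑' s : ℕ, ((((s + 1) * (s + 2) : ℕ) : ℝ≥0∞))⁻¹ := by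
          congr 1
          simp only [← mul_assoc]
          exact ENNReal.tsum_mul_left
      _ ≤ q + q * 8 * 1 := by
          exact add_le_add_right (mul_le_mul_right telescope_sum_le _) _
      _ = 9 * q := by ring
  have h9q : 9 * q < 1 := by
    calc (9 : ℝ≥0∞) * q ≤ 9 * ENNReal.ofReal (1 / 100) :=
        mul_le_mul_right (ENNReal.ofReal_le_ofReal (le_of_lt hp1)) _
      _ = ENNReal.ofReal (9 * (1 / 100)) := by
          rw [ENNReal.ofReal_mul (by norm_num : (0:ℝ) ≤ 9)]
          norm_num
      _ < 1 := by
          rw [show (1 : ℝ≥0∞) = ENNReal.ofReal 1 by simp]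
          exact ENNReal.ofReal_lt_ofReal_iff_of_nonneg (by norm_num) |>.2 (by norm_num)
  by_contra hc
  push_neg at hc
  have hzero : μ {ξ : ℕ → Bool | ξ 0 = false ∧ Wind ξ} = 0 := le_antisymm hc zero_le
  have huniv : (1 : ℝ≥0∞) = μ Set.univ := (measure_univ).symm
  have : (1 : ℝ≥0∞) ≤ 9 * q := by
    calc (1 : ℝ≥0∞) = μ Set.univ := huniv
      _ = μ ({ξ : ℕ → Bool | ξ 0 = false ∧ Wind ξ} ∪ {ξ : ℕ → Bool | ξ 0 = false ∧ Wind ξ}ᶜ) := by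
          rw [Set.union_compl_self]
      _ ≤ μ {ξ : ℕ → Bool | ξ 0 = false ∧ Wind ξ} + μ ({ξ : ℕ → Bool | ξ 0 = false ∧ Wind ξ}ᶜ) :=
          measure_union_le _ _
      _ ≤ 0 + 9 * q := add_le_add (le_of_eq hzero) hsum
      _ = 9 * q := by rw [zero_add]
  exact absurd (lt_of_le_of_lt this h9q) (lt_irrefl _)


/-! ### upper bound : `mBT r 2 A < ⊤` -/

lemma ring_subset {r : ℕ} (m : ℕ) :
    ringBT r m ⊆ Set.Ico (-((r : ℤ) ^ m)) ((r : ℤ) ^ m) := by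
  unfold ringBT
  split
  · next h => subst h; simp [pow_one]
  · exact Set.diff_subset

lemma nuBT_le_inv {r : ℕ} (hr : 2 ≤ r) (A : Set ℤ) (m : ℕ) (hm : 1 ≤ m) :
    nuBT 2 A (ringBT r m) (2 * (r : ℝ) ^ m) ≤ (((2 * r ^ m : ℕ)) : ℝ≥0∞)⁻¹ := by
  set D : ℕ := 2 * r ^ m with hD
  have hrm : 1 ≤ r ^ m := Nat.one_le_pow _ _ (by omega)
  have hD0 : ((D : ℕ) : ℝ≥0∞) ≠ 0 := by
    simp only [ne_eq, Nat.cast_eq_zero]; omega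
  have hDt : ((D : ℕ) : ℝ≥0∞) ≠ ⊤ := ENNReal.natCast_ne_top D
  set B : ℕ → ℤ × ℤ := fun i =>
    if i < D then (-((r : ℤ) ^ m) + i, -((r : ℤ) ^ m) + i + 1) else (0, 0) with hB
  have hcov : A ∩ ringBT r m ⊆ ⋃ i, Set.Ico (B i).1 (B i).2 := by
    intro x hx
    have hx2 : x ∈ Set.Ico (-((r : ℤ) ^ m)) ((r : ℤ) ^ m) := ring_subset m hx.2
    rw [Set.mem_Ico] at hx2
    set i : ℕ := (x + (r : ℤ) ^ m).toNat with hi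
    have hcast : ((D : ℕ) : ℤ) = 2 * (r : ℤ) ^ m := by push_cast [hD]; ring
    have hiD : i < D := by
      rw [hi]; omega
    refine Set.mem_iUnion.2 ⟨i, ?_⟩
    rw [hB]
    simp only [if_pos hiD, Set.mem_Ico]
    omega
  have hcost : (∑' i, ENNReal.ofReal ((((B i).2 - (B i).1 : ℤ)) : ℝ) ^ (2:ℝ)) = ((D : ℕ) : ℝ≥0∞) := by
    have hterm : ∀ i : ℕ, ENNReal.ofReal ((((B i).2 - (B i).1 : ℤ)) : ℝ) ^ (2:ℝ)
        = if i < D then 1 else 0 := by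
      intro i
      rw [hB]
      split
      · next h =>
        simp only [if_pos h]
        norm_num
      · next h =>
        simp only [if_neg h]
        norm_num
    rw [tsum_congr hterm, tsum_eq_sum (s := Finset.range D) (by
      intro i hi
      rw [Finset.mem_range] at hi
      rw [if_neg hi])]
    rw [Finset.sum_ite_of_true (by intro i hi; rwa [Finset.mem_range] at hi)]
    simp
  have hinf : (⨅ (B : ℕ → ℤ × ℤ) (_ : A ∩ ringBT r m ⊆ ⋃ i, Set.Ico (B i).1 (B i).2),
      ∑' i, ENNReal.ofReal ((((B i).2 - (B i).1 : ℤ)) : ℝ) ^ (2:ℝ)) ≤ ((D : ℕ) : ℝ≥0∞) := by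
    refine le_trans (iInf_le _ B) ?_
    refine le_trans (iInf_le _ hcov) ?_
    rw [hcost]
  unfold nuBT
  have hdF : ENNReal.ofReal (2 * (r : ℝ) ^ m) = ((D : ℕ) : ℝ≥0∞) := by
    rw [show (2 * (r : ℝ) ^ m) = ((D : ℕ) : ℝ) by push_cast [hD]; ring, ENNReal.ofReal_natCast]
  rw [hdF]
  have hpow : ((D : ℕ) : ℝ≥0∞) ^ (2 : ℝ) = ((D : ℕ) : ℝ≥0∞) * ((D : ℕ) : ℝ≥0∞) := by
    rw [show (2:ℝ) = ((2:ℕ):ℝ) by norm_num, ENNReal.rpow_natCast, sq]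
  calc (⨅ (B : ℕ → ℤ × ℤ) (_ : A ∩ ringBT r m ⊆ ⋃ i, Set.Ico (B i).1 (B i).2),
      ∑' i, ENNReal.ofReal ((((B i).2 - (B i).1 : ℤ)) : ℝ) ^ (2:ℝ)) / ((D : ℕ) : ℝ≥0∞) ^ (2:ℝ)
      ≤ ((D : ℕ) : ℝ≥0∞) / ((D : ℕ) : ℝ≥0∞) ^ (2:ℝ) := ENNReal.div_le_div_right hinf _
    _ = (((D : ℕ)) : ℝ≥0∞)⁻¹ := by
        rw [hpow, ENNReal.div_eq_inv_mul, ENNReal.mul_inv (Or.inl hD0) (Or.inl hDt)]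
        rw [mul_assoc, ENNReal.inv_mul_cancel hD0 hDt, mul_one]

lemma mBT_two_lt_top {r : ℕ} (hr : 2 ≤ r) (A : Set ℤ) : mBT r 2 A < ⊤ := by
  have hle : mBT r 2 A ≤ ∑' n : ℕ, ((2 : ℝ≥0∞)⁻¹) ^ n := by
    unfold mBT
    apply Summable.tsum_le_tsum _ ENNReal.summable ENNReal.summable
    intro n
    calc nuBT 2 A (ringBT r (n + 1)) (2 * (r : ℝ) ^ (n + 1))
        ≤ (((2 * r ^ (n+1) : ℕ)) : ℝ≥0∞)⁻¹ := nuBT_le_inv hr A (n+1) (by omega)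
      _ ≤ (((2 ^ n : ℕ)) : ℝ≥0∞)⁻¹ := by
          apply ENNReal.inv_le_inv.2
          have : (2:ℕ) ^ n ≤ 2 * r ^ (n + 1) := by
            calc (2:ℕ) ^ n ≤ 2 ^ (n + 1) := Nat.pow_le_pow_right (by norm_num) (by omega)
              _ ≤ r ^ (n + 1) := Nat.pow_le_pow_left hr _
              _ ≤ 2 * r ^ (n + 1) := by omega
          exact_mod_cast Nat.cast_le.2 this
      _ = ((2 : ℝ≥0∞)⁻¹) ^ n := by
          rw [← ENNReal.inv_pow]
          congr 1
          push_cast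
          rfl
  have hgeo : ∑' n : ℕ, ((2 : ℝ≥0∞)⁻¹) ^ n = (1 - 2⁻¹)⁻¹ := ENNReal.tsum_geometric _
  have h12 : (1 : ℝ≥0∞) - 2⁻¹ = 2⁻¹ := by
    rw [show (1:ℝ≥0∞) = 2⁻¹ + 2⁻¹ by rw [← two_mul]; rw [ENNReal.mul_inv_cancel] <;> norm_num]
    rw [ENNReal.add_sub_cancel_right (by norm_num)]
  refine lt_of_le_of_lt hle ?_
  rw [hgeo, h12]
  simp

/-! ### lower bound -/

lemma cost_pointwise {α : ℝ} (ha0 : 0 < α) (ha1 : α ≤ 1) {D : ℕ} (hD : 1 ≤ D) (x : ℕ) :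
    ((min x D : ℕ) : ℝ≥0∞) * (((D : ℕ) : ℝ≥0∞) ^ α / ((D : ℕ) : ℝ≥0∞)) ≤ ((x : ℕ) : ℝ≥0∞) ^ α := by
  set 𝔇 : ℝ≥0∞ := ((D : ℕ) : ℝ≥0∞) with hDD
  have hD0 : 𝔇 ≠ 0 := by simp only [hDD, ne_eq, Nat.cast_eq_zero]; omega
  have hDt : 𝔇 ≠ ⊤ := ENNReal.natCast_ne_top D
  rcases Nat.eq_zero_or_pos x with hx0 | hx1
  · subst hx0; simp
  rcases le_or_gt x D with hxD | hxD
  · rw [min_eq_left hxD]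
    set X : ℝ≥0∞ := ((x : ℕ) : ℝ≥0∞) with hX
    have hX0 : X ≠ 0 := by simp only [hX, ne_eq, Nat.cast_eq_zero]; omega
    have hXt : X ≠ ⊤ := ENNReal.natCast_ne_top x
    have hXD : X ≤ 𝔇 := by exact_mod_cast Nat.cast_le.2 hxD
    have hXsplit : X = X ^ α * X ^ (1 - α) := by
      rw [← ENNReal.rpow_add _ _ hX0 hXt]
      norm_num
    have hmid : X ^ (1 - α) * 𝔇 ^ α ≤ 𝔇 := by
      calc X ^ (1 - α) * 𝔇 ^ α ≤ 𝔇 ^ (1 - α) * 𝔇 ^ α :=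
            mul_le_mul_left (ENNReal.rpow_le_rpow hXD (by linarith)) _
        _ = 𝔇 := by
            rw [← ENNReal.rpow_add _ _ hD0 hDt]
            norm_num
    calc X * (𝔇 ^ α / 𝔇) = X ^ α * (X ^ (1 - α) * 𝔇 ^ α) / 𝔇 := by
          simp only [div_eq_mul_inv]
          conv_lhs => rw [hXsplit]
          ring
      _ ≤ X ^ α * 𝔇 / 𝔇 := by
          apply ENNReal.div_le_div_right
          exact mul_le_mul_right hmid _
      _ = X ^ α := by
          rw [mul_div_assoc, ENNReal.div_self hD0 hDt, mul_one]
  · rw [min_eq_right (le_of_lt hxD)]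
    have heq : 𝔇 * (𝔇 ^ α / 𝔇) = 𝔇 ^ α := ENNReal.mul_div_cancel hD0 hDt
    rw [heq]
    apply ENNReal.rpow_le_rpow _ (le_of_lt ha0)
    exact_mod_cast Nat.cast_le.2 (le_of_lt hxD)

lemma cost_rewrite (B : ℕ → ℤ × ℤ) (α : ℝ) (ha0 : 0 < α) (i : ℕ) :
    ENNReal.ofReal ((((B i).2 - (B i).1 : ℤ)) : ℝ) ^ α
      = ((((B i).2 - (B i).1).toNat : ℕ) : ℝ≥0∞) ^ α := by
  rcases le_or_gt 0 ((B i).2 - (B i).1) with h | h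
  · congr 1
    have heq : ((B i).2 - (B i).1 : ℤ) = (((B i).2 - (B i).1).toNat : ℤ) :=
      (Int.toNat_of_nonneg h).symm
    conv_lhs => rw [heq]
    rw [Int.cast_natCast, ENNReal.ofReal_natCast]
  · rw [Int.toNat_of_nonpos (le_of_lt h)]
    rw [ENNReal.ofReal_of_nonpos (by exact_mod_cast le_of_lt h)]
    simp

/-- the points of `zeroSetZ etaSeq` in an annulus, one per window -/
lemma nu_lower {r : ℕ} (hr : 2 ≤ r) {α : ℝ} (ha0 : 0 < α) (ha1 : α ≤ 1) {m : ℕ} (hm : 2 ≤ m) :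
    (((r ^ m - r ^ (m - 1)) / (2 * Nat.log 2 (r ^ m + 2) + 10) - 1 : ℕ) : ℝ≥0∞)
        / (((2 * r ^ m : ℕ)) : ℝ≥0∞)
      ≤ nuBT α (zeroSetZ etaSeq) (ringBT r m) (2 * (r : ℝ) ^ m) := by
  classical
  set G : ℕ := 2 * Nat.log 2 (r ^ m + 2) + 10 with hG
  set x : ℕ := r ^ m - r ^ (m - 1) with hx
  set q : ℕ := x / G - 1 with hq
  set D : ℕ := 2 * r ^ m with hD
  have hrm1 : r ^ (m - 1) < r ^ m := Nat.pow_lt_pow_right (by omega) (by omega)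
  have hrm0 : 1 ≤ r ^ (m - 1) := Nat.one_le_pow _ _ (by omega)
  have hG1 : 1 ≤ G := by omega
  have hqD : q ≤ D := by
    have : x / G ≤ x := Nat.div_le_self _ _
    omega
  set 𝔇 : ℝ≥0∞ := ((D : ℕ) : ℝ≥0∞) with hDD
  have hD1 : 1 ≤ D := by omega
  have hD0 : 𝔇 ≠ 0 := by simp only [hDD, ne_eq, Nat.cast_eq_zero]; omega
  have hDt : 𝔇 ≠ ⊤ := ENNReal.natCast_ne_top D
  have hDα0 : 𝔇 ^ α ≠ 0 := by
    intro hc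
    rw [ENNReal.rpow_eq_zero_iff] at hc
    rcases hc with ⟨h1, _⟩ | ⟨h1, _⟩
    · exact hD0 h1
    · exact hDt h1
  have hDαt : 𝔇 ^ α ≠ ⊤ := ENNReal.rpow_ne_top_of_nonneg (le_of_lt ha0) hDt
  -- points in the windows
  have hpt : ∀ j, j < q → ∃ pn : ℕ, (∃ k, zp k + 1 = pn) ∧
      r ^ (m - 1) + j * G + 1 ≤ pn ∧ pn ≤ r ^ (m - 1) + j * G + G - 1 := by
    intro j hj
    obtain ⟨k, hk1, hk2⟩ := zdense (r ^ (m - 1) + j * G)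
    refine ⟨zp k + 1, ⟨k, rfl⟩, by omega, ?_⟩
    have hjx : (j + 1) * G ≤ x := by
      have h5 : j + 1 ≤ x / G := by omega
      calc (j + 1) * G ≤ (x / G) * G := Nat.mul_le_mul_right _ h5
        _ ≤ x := Nat.div_mul_le_self _ _
    have h3 : (j + 1) * G = j * G + G := by ring
    have hux : r ^ (m - 1) + j * G ≤ r ^ m := by
      generalize hw : j * G = w at h3 ⊢
      generalize hw2 : (j + 1) * G = w2 at h3 hjx
      omega
    have hlog : Nat.log 2 (r ^ (m - 1) + j * G + 2) ≤ Nat.log 2 (r ^ m + 2) :=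
      Nat.log_mono_right (by omega)
    generalize hw : j * G = w at hk1 hk2 hux hlog ⊢
    omega
  choose pt hptz hpt1 hpt2 using hpt
  set f : ℕ → ℤ := fun j => if h : j < q then ((pt j h : ℕ) : ℤ) else 0 with hf
  set T : Finset ℤ := (Finset.range q).image f with hT
  have hfj : ∀ j (hj : j < q), j * G ≤ pt j hj - 1 - r ^ (m - 1) ∧
      pt j hj - 1 - r ^ (m - 1) < (j + 1) * G := by
    intro j hj
    have h1 := hpt1 j hj
    have h2 := hpt2 j hj
    have h3 : (j + 1) * G = j * G + G := by ring
    generalize hw : j * G = w at h1 h2 h3 ⊢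
    generalize hw2 : (j + 1) * G = w2 at h3 ⊢
    omega
  have hinj : Set.InjOn f ↑(Finset.range q) := by
    intro j hj j' hj' hEq
    rw [Finset.mem_coe, Finset.mem_range] at hj hj'
    rw [hf] at hEq
    simp only [dif_pos hj, dif_pos hj'] at hEq
    have hEqn : pt j hj = pt j' hj' := by exact_mod_cast hEq
    have e1 : (pt j hj - 1 - r ^ (m - 1)) / G = j :=
      Nat.div_eq_of_lt_le (hfj j hj).1 (hfj j hj).2
    have e2 : (pt j' hj' - 1 - r ^ (m - 1)) / G = j' :=
      Nat.div_eq_of_lt_le (hfj j' hj').1 (hfj j' hj').2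
    rw [← e1, ← e2, hEqn]
  have hTcard : T.card = q := by
    rw [hT, Finset.card_image_of_injOn hinj, Finset.card_range]
  have hTsub : ∀ y ∈ T, y ∈ zeroSetZ etaSeq ∩ ringBT r m := by
    intro y hy
    rw [hT, Finset.mem_image] at hy
    obtain ⟨j, hjq, hfy⟩ := hy
    rw [Finset.mem_range] at hjq
    rw [hf] at hfy
    simp only [dif_pos hjq] at hfy
    obtain ⟨k, hk⟩ := hptz j hjq
    have hple : pt j hjq < r ^ m := by
      have h2 := hpt2 j hjq
      have hjx : (j + 1) * G ≤ x := by
        have h5 : j + 1 ≤ x / G := by omega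
        calc (j + 1) * G ≤ (x / G) * G := Nat.mul_le_mul_right _ h5
          _ ≤ x := Nat.div_mul_le_self _ _
      have h3 : (j + 1) * G = j * G + G := by ring
      generalize hw : j * G = w at h2 h3
      generalize hw2 : (j + 1) * G = w2 at h3 hjx
      omega
    have hpge : r ^ (m - 1) + 1 ≤ pt j hjq := by
      have := hpt1 j hjq
      omega
    constructor
    · rw [← hfy]
      refine ⟨zp k, ?_, etaSeq_zp k⟩
      rw [← hk]
      push_cast
      ring
    · rw [← hfy]
      unfold ringBT
      rw [if_neg (by omega : ¬ m = 1)]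
      constructor
      · rw [Set.mem_Ico]
        constructor
        · have : (0 : ℤ) ≤ ((pt j hjq : ℕ) : ℤ) := by positivity
          have hpos : (0 : ℤ) ≤ (r : ℤ) ^ m := by positivity
          omega
        · calc ((pt j hjq : ℕ) : ℤ) < ((r ^ m : ℕ) : ℤ) := by exact_mod_cast hple
            _ = (r : ℤ) ^ m := by push_cast; ring
      · rw [Set.mem_Ico]
        push_neg
        intro _
        calc (r : ℤ) ^ (m - 1) = ((r ^ (m - 1) : ℕ) : ℤ) := by push_cast; ring
          _ ≤ ((pt j hjq : ℕ) : ℤ) := by exact_mod_cast le_trans (by omega) hpge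
  -- the infimum bound
  have hinf : ((q : ℕ) : ℝ≥0∞) * (𝔇 ^ α / 𝔇)
      ≤ ⨅ (B : ℕ → ℤ × ℤ) (_ : zeroSetZ etaSeq ∩ ringBT r m ⊆ ⋃ i, Set.Ico (B i).1 (B i).2),
        ∑' i, ENNReal.ofReal ((((B i).2 - (B i).1 : ℤ)) : ℝ) ^ α := by
    refine le_iInf fun B => le_iInf fun hcov => ?_
    -- choice of index
    have hchoice : ∀ y : T, ∃ i, (y : ℤ) ∈ Set.Ico (B i).1 (B i).2 := by
      intro y
      exact Set.mem_iUnion.1 (hcov (hTsub y y.2))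
    choose ix hix using hchoice
    set I : Finset ℕ := T.attach.image ix with hI
    have hcount : q ≤ ∑ i ∈ I, min ((B i).2 - (B i).1).toNat D := by
      have hsub : T ⊆ I.biUnion (fun i => T.filter (fun y => (B i).1 ≤ y ∧ y < (B i).2)) := by
        intro y hy
        refine Finset.mem_biUnion.2 ⟨ix ⟨y, hy⟩, ?_, ?_⟩
        · rw [hI, Finset.mem_image]
          exact ⟨⟨y, hy⟩, Finset.mem_attach _ _, rfl⟩
        · rw [Finset.mem_filter]
          have h2 := hix ⟨y, hy⟩
          rw [Set.mem_Ico] at h2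
          exact ⟨hy, h2.1, h2.2⟩
      calc q = T.card := hTcard.symm
        _ ≤ (I.biUnion (fun i => T.filter (fun y => (B i).1 ≤ y ∧ y < (B i).2))).card :=
            Finset.card_le_card hsub
        _ ≤ ∑ i ∈ I, (T.filter (fun y => (B i).1 ≤ y ∧ y < (B i).2)).card :=
            Finset.card_biUnion_le
        _ ≤ ∑ i ∈ I, min ((B i).2 - (B i).1).toNat D := by
            apply Finset.sum_le_sum
            intro i _
            apply le_min
            · have hsub2 : T.filter (fun y => (B i).1 ≤ y ∧ y < (B i).2)
                  ⊆ Finset.Ico (B i).1 (B i).2 := by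
                intro y hy
                rw [Finset.mem_filter] at hy
                rw [Finset.mem_Ico]
                exact hy.2
              calc (T.filter (fun y => (B i).1 ≤ y ∧ y < (B i).2)).card
                  ≤ (Finset.Ico (B i).1 (B i).2).card := Finset.card_le_card hsub2
                _ = ((B i).2 - (B i).1).toNat := Int.card_Ico _ _
            · calc (T.filter (fun y => (B i).1 ≤ y ∧ y < (B i).2)).card
                  ≤ T.card := Finset.card_le_card (Finset.filter_subset _ _)
                _ = q := hTcard
                _ ≤ D := hqD
    -- now sum up
    calc ((q : ℕ) : ℝ≥0∞) * (𝔇 ^ α / 𝔇)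
        ≤ ((∑ i ∈ I, min ((B i).2 - (B i).1).toNat D : ℕ) : ℝ≥0∞) * (𝔇 ^ α / 𝔇) := by
          apply mul_le_mul_left
          exact_mod_cast Nat.cast_le.2 hcount
      _ = (∑ i ∈ I, (((min ((B i).2 - (B i).1).toNat D : ℕ)) : ℝ≥0∞)) * (𝔇 ^ α / 𝔇) := by
          rw [Nat.cast_sum]
      _ ≤ (∑' i : ℕ, (((min ((B i).2 - (B i).1).toNat D : ℕ)) : ℝ≥0∞)) * (𝔇 ^ α / 𝔇) :=
          mul_le_mul_left (ENNReal.sum_le_tsum I) _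
      _ = ∑' i : ℕ, (((min ((B i).2 - (B i).1).toNat D : ℕ)) : ℝ≥0∞) * (𝔇 ^ α / 𝔇) := by
          rw [ENNReal.tsum_mul_right]
      _ ≤ ∑' i : ℕ, ENNReal.ofReal ((((B i).2 - (B i).1 : ℤ)) : ℝ) ^ α := by
          apply Summable.tsum_le_tsum _ ENNReal.summable ENNReal.summable
          intro i
          rw [cost_rewrite B α ha0 i]
          exact cost_pointwise ha0 ha1 hD1 _
  -- divide by the normalizer
  unfold nuBT
  have hdF : ENNReal.ofReal (2 * (r : ℝ) ^ m) = 𝔇 := by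
    rw [show (2 * (r : ℝ) ^ m) = ((D : ℕ) : ℝ) by push_cast [hD]; ring, ENNReal.ofReal_natCast]
  rw [hdF]
  calc ((q : ℕ) : ℝ≥0∞) / 𝔇 = (((q : ℕ) : ℝ≥0∞) / 𝔇) * (𝔇 ^ α / 𝔇 ^ α) := by
        rw [ENNReal.div_self hDα0 hDαt, mul_one]
    _ = (((q : ℕ) : ℝ≥0∞) * (𝔇 ^ α / 𝔇)) / 𝔇 ^ α := by
        simp only [div_eq_mul_inv]
        ring
    _ ≤ _ := ENNReal.div_le_div_right hinf _

/-! ### numeric bounds and divergence -/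

lemma pow_aux {m : ℕ} (hm : 15 ≤ m) : 240 * (m + 1) ≤ 2 ^ (m - 1) := by
  induction m with
  | zero => omega
  | succ n ih =>
    rcases Nat.lt_or_ge n 15 with h | h
    · interval_cases n <;> first | omega | norm_num
    · have h1 := ih (by omega)
      have h2 : 2 ^ (n + 1 - 1) = 2 * 2 ^ (n - 1) := by
        rw [show n + 1 - 1 = (n - 1) + 1 by omega, pow_succ]
        ring
      omega

lemma log_rm_bound {r m : ℕ} (hr : 2 ≤ r) : Nat.log 2 (r ^ m + 2) ≤ r * (m + 2) := by
  have h3 : 1 ≤ r ^ m := Nat.one_le_pow _ _ (by omega)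
  have h1 : r ^ m + 2 ≤ r ^ (m + 2) := by
    have he : r ^ (m + 2) = r ^ m * (r * r) := by ring
    have h4 : 4 ≤ r * r := Nat.mul_le_mul hr hr
    have h5 : r ^ m * 4 ≤ r ^ m * (r * r) := Nat.mul_le_mul_left _ h4
    omega
  have h2 : r ^ (m + 2) ≤ 2 ^ (r * (m + 2)) := by
    calc r ^ (m + 2) ≤ (2 ^ r) ^ (m + 2) :=
          Nat.pow_le_pow_left (le_of_lt (Nat.lt_two_pow_self (n := r))) _
      _ = 2 ^ (r * (m + 2)) := by rw [← pow_mul]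
  calc Nat.log 2 (r ^ m + 2) ≤ Nat.log 2 (2 ^ (r * (m + 2))) :=
        Nat.log_mono_right (le_trans h1 h2)
    _ = r * (m + 2) := Nat.log_pow one_lt_two _

lemma q_bound {r m : ℕ} (hr : 2 ≤ r) (hm : 15 ≤ m) :
    2 * r ^ m ≤ ((r ^ m - r ^ (m - 1)) / (2 * Nat.log 2 (r ^ m + 2) + 10) - 1)
      * (416 * r * (m + 1)) := by
  set G := 2 * Nat.log 2 (r ^ m + 2) + 10 with hG
  set x := r ^ m - r ^ (m - 1) with hx
  set K := x / G with hK
  have hG1 : 1 ≤ G := by omega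
  have hGb : G ≤ 13 * r * (m + 1) := by
    have hlog := log_rm_bound (r := r) (m := m) hr
    have h1 : 2 * (r * (m + 2)) + 10 ≤ 13 * r * (m + 1) := by nlinarith
    omega
  have hrm : r * r ^ (m - 1) = r ^ m := by
    rw [← pow_succ']
    congr 1
    omega
  have h2x : r ^ m ≤ 2 * x := by
    have h1 : 2 * r ^ (m - 1) ≤ r * r ^ (m - 1) := Nat.mul_le_mul_right _ hr
    have h0 : 1 ≤ r ^ (m - 1) := Nat.one_le_pow _ _ (by omega)
    omega
  have hpow := pow_aux hm
  have hrm2 : 240 * r * (m + 1) ≤ r ^ m := by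
    calc 240 * r * (m + 1) = r * (240 * (m + 1)) := by ring
      _ ≤ r * 2 ^ (m - 1) := Nat.mul_le_mul_left _ hpow
      _ ≤ r * r ^ (m - 1) := Nat.mul_le_mul_left _ (Nat.pow_le_pow_left hr _)
      _ = r ^ m := hrm
  have hxG : 9 * G ≤ x := by
    have h1 : 18 * G ≤ 18 * (13 * r * (m + 1)) := Nat.mul_le_mul_left _ hGb
    have h2 : 18 * (13 * r * (m + 1)) = 234 * (r * (m + 1)) := by ring
    have h3 : 240 * r * (m + 1) = 240 * (r * (m + 1)) := by ring
    omega
  have hKG : x < (K + 1) * G := by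
    have h5 : x % G < G := Nat.mod_lt _ (by omega)
    calc x = G * K + x % G := by rw [hK]; exact (Nat.div_add_mod x G).symm
      _ < G * K + G := by omega
      _ = (K + 1) * G := by ring
  have hK9 : 9 ≤ K + 1 := by
    by_contra hc
    push_neg at hc
    have h6 : (K + 1) * G ≤ 9 * G := Nat.mul_le_mul_right _ (by omega)
    omega
  have hmain : r ^ m ≤ (K - 1) * (78 * r * (m + 1)) := by
    have h6 : K + 1 ≤ 3 * (K - 1) := by omega
    have h7 : r ^ m ≤ 2 * ((K + 1) * G) := by omega
    have h8 : (K + 1) * G ≤ (3 * (K - 1)) * G := Nat.mul_le_mul_right _ h6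
    have h9 : (3 * (K - 1)) * G = 3 * ((K - 1) * G) := by ring
    have h10 : (K - 1) * G ≤ (K - 1) * (13 * r * (m + 1)) := Nat.mul_le_mul_left _ hGb
    have h11 : (K - 1) * (78 * r * (m + 1)) = 6 * ((K - 1) * (13 * r * (m + 1))) := by ring
    omega
  have h12 : (K - 1) * (416 * r * (m + 1)) = 2 * ((K - 1) * (78 * r * (m + 1)))
      + (K - 1) * (260 * r * (m + 1)) := by ring
  have h13 : 0 ≤ (K - 1) * (260 * r * (m + 1)) := Nat.zero_le _
  omega

lemma harmonic_top (c : ℕ) (hc : c ≠ 0) :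
    ∑' k : ℕ, (((c * (k + 1) : ℕ)) : ℝ≥0∞)⁻¹ = ⊤ := by
  have h1 : ∀ k : ℕ, (((c * (k + 1) : ℕ)) : ℝ≥0∞)⁻¹
      = ((c : ℝ≥0∞))⁻¹ * (((k + 1 : ℕ)) : ℝ≥0∞)⁻¹ := by
    intro k
    rw [Nat.cast_mul, ENNReal.mul_inv (Or.inl (by simp [hc])) (Or.inr (by simp))]
  rw [tsum_congr h1, ENNReal.tsum_mul_left]
  have h2 : ∑' k : ℕ, (((k + 1 : ℕ)) : ℝ≥0∞)⁻¹ = ⊤ := by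
    by_contra hne
    set f : ℕ → ℝ≥0 := fun k => (((k + 1 : ℕ) : ℝ≥0))⁻¹ with hfd
    have hco : ∀ k : ℕ, (((k + 1 : ℕ)) : ℝ≥0∞)⁻¹ = (f k : ℝ≥0∞) := by
      intro k
      rw [hfd]
      rw [ENNReal.coe_inv (by simp)]
      congr 1
    have hsum : Summable f := by
      apply ENNReal.tsum_coe_ne_top_iff_summable.1
      rw [← tsum_congr hco]
      exact hne
    have hsumR : Summable (fun k : ℕ => (((k + 1 : ℕ)) : ℝ)⁻¹) := by
      have h3 := NNReal.summable_coe.2 hsum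
      simpa [hfd, NNReal.coe_inv] using h3
    have hsumN : Summable (fun n : ℕ => ((n : ℝ))⁻¹) :=
      (summable_nat_add_iff 1).1 (by simpa using hsumR)
    exact Real.not_summable_natCast_inv hsumN
  rw [h2, ENNReal.mul_top]
  exact ENNReal.inv_ne_zero.2 (ENNReal.natCast_ne_top c)

lemma inv_le_div_of_le {a b c : ℕ} (hc : c ≠ 0) (hb : 1 ≤ b) (h : b ≤ a * c) :
    (((c : ℕ)) : ℝ≥0∞)⁻¹ ≤ ((a : ℕ) : ℝ≥0∞) / ((b : ℕ) : ℝ≥0∞) := by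
  have hc0 : ((c : ℕ) : ℝ≥0∞) ≠ 0 := Nat.cast_ne_zero.2 hc
  have hct : ((c : ℕ) : ℝ≥0∞) ≠ ⊤ := ENNReal.natCast_ne_top c
  rw [ENNReal.le_div_iff_mul_le (Or.inl (Nat.cast_ne_zero.2 (by omega)))
    (Or.inl (ENNReal.natCast_ne_top b))]
  calc (((c : ℕ)) : ℝ≥0∞)⁻¹ * ((b : ℕ) : ℝ≥0∞)
      ≤ (((c : ℕ)) : ℝ≥0∞)⁻¹ * (((a * c : ℕ)) : ℝ≥0∞) := by
        apply mul_le_mul_right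
        exact_mod_cast Nat.cast_le.2 h
    _ = ((a : ℕ) : ℝ≥0∞) := by
        rw [Nat.cast_mul, mul_comm ((a : ℕ) : ℝ≥0∞), ← mul_assoc,
          ENNReal.inv_mul_cancel hc0 hct, one_mul]

lemma mBT_eq_top {r : ℕ} (hr : 2 ≤ r) {α : ℝ} (ha0 : 0 < α) (ha1 : α < 1) :
    mBT r α (zeroSetZ etaSeq) = ⊤ := by
  have hterm : ∀ k : ℕ, (((6656 * r * (k + 1) : ℕ)) : ℝ≥0∞)⁻¹
      ≤ nuBT α (zeroSetZ etaSeq) (ringBT r (k + 15)) (2 * (r : ℝ) ^ (k + 15)) := by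
    intro k
    have hm15 : 15 ≤ k + 15 := by omega
    have hqb := q_bound (r := r) (m := k + 15) hr hm15
    set q := (r ^ (k + 15) - r ^ (k + 15 - 1)) / (2 * Nat.log 2 (r ^ (k + 15) + 2) + 10) - 1
      with hqd
    set D := 2 * r ^ (k + 15) with hDd
    have hlow := nu_lower (r := r) hr ha0 (le_of_lt ha1) (show 2 ≤ k + 15 by omega)
    refine le_trans ?_ hlow
    have hDC : (D : ℕ) ≤ q * (6656 * r * (k + 1)) := by
      have h1 : q * (416 * r * (k + 15 + 1)) ≤ q * (6656 * r * (k + 1)) := by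
        apply Nat.mul_le_mul_left
        calc 416 * r * (k + 15 + 1) ≤ 416 * r * (16 * (k + 1)) :=
              Nat.mul_le_mul_left _ (by omega)
          _ = 6656 * r * (k + 1) := by ring
      have h2 := hqb
      omega
    set C := 6656 * r * (k + 1) with hCd
    have hrpos : 1 ≤ r ^ (k + 15) := Nat.one_le_pow _ _ (by omega)
    exact inv_le_div_of_le (a := q) (b := D) (c := C)
      (by rw [hCd]; positivity) (by omega) hDC
  have hinj : Function.Injective (fun k : ℕ => k + 14) := fun a b h => Nat.add_right_cancel h
  have hchain : (⊤ : ℝ≥0∞) ≤ mBT r α (zeroSetZ etaSeq) := by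
    rw [← harmonic_top (6656 * r) (by positivity)]
    calc ∑' k : ℕ, (((6656 * r * (k + 1) : ℕ)) : ℝ≥0∞)⁻¹
        ≤ ∑' k : ℕ, nuBT α (zeroSetZ etaSeq) (ringBT r ((k + 14) + 1))
            (2 * (r : ℝ) ^ ((k + 14) + 1)) := by
          apply Summable.tsum_le_tsum _ ENNReal.summable ENNReal.summable
          intro k
          exact hterm k
      _ ≤ ∑' n : ℕ, nuBT α (zeroSetZ etaSeq) (ringBT r (n + 1)) (2 * (r : ℝ) ^ (n + 1)) :=
          ENNReal.tsum_comp_le_tsum_of_injective hinj _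
      _ = mBT r α (zeroSetZ etaSeq) := rfl
  exact top_le_iff.1 hchain

lemma dim_ge {r : ℕ} (hr : 2 ≤ r) : 1 ≤ dimBT r (zeroSetZ etaSeq) := by
  unfold dimBT
  apply le_csInf
  · exact ⟨2, by norm_num, mBT_two_lt_top hr _⟩
  · rintro b ⟨hb0, hbfin⟩
    by_contra hlt
    push_neg at hlt
    rw [mBT_eq_top hr hb0 hlt] at hbfin
    exact absurd hbfin (by simp)


end BW

theorem statement_0 (ε : ℝ) (hε : 0 < ε) :
    ∃ pe : ℝ, 0 < pe ∧ pe < 1 ∧ ∃ η : ℕ → Bool,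
      (∀ r : ℕ, 2 ≤ r → 1 - ε ≤ dimBT r (zeroSetZ η)) ∧
      ∀ p : ℝ, 0 < p → p < pe → ∀ μ : Measure (ℕ → Bool),
        IsBernoulliProduct μ p → 0 < μ {ξ | Compatible η ξ} := by
  refine ⟨1 / 100, by norm_num, by norm_num, BW.etaSeq, ?_, ?_⟩
  · intro r hr
    have h := BW.dim_ge hr
    linarith
  · intro p hp0 hp1 μ hB
    have hpos := BW.mu_E_pos hp0 hp1 hB
    have hsub : {ξ : ℕ → Bool | ξ 0 = false ∧ BW.Wind ξ} ⊆ {ξ | Compatible BW.etaSeq ξ} :=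
      fun ξ hξ => BW.compat_of_E hξ.1 hξ.2
    exact lt_of_lt_of_le hpos (measure_mono hsub)

end Paper
end

section
/- If η ∈ Ξ has only finitely many zeroes (i.e. {i : η_i = 0} is finite), then for every p with 0 < p < 1 one has ℙ_p{ξ ∈ Ξ : (η, ξ) is compatible} > 0. -/
open Filter Set MeasureTheory
open scoped ENNReal NNReal

namespace Paper

/-! ### Auxiliary lemmas for statement_1 -/

/-- Prepend a bit to a sequence. -/
def bcons (b : Bool) (σ : ℕ → Bool) : ℕ → Bool
  | 0 => b
  | n + 1 => σ n

/-- Number of zeroes among the first `N` entries, defined by peeling from the front. -/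
def zc : (ℕ → Bool) → ℕ → ℕ
  | _, 0 => 0
  | η, N + 1 => (if η 0 = false then 1 else 0) + zc (fun i => η (i + 1)) N

lemma delta1_bcons (c : Bool) (a : ℕ → Bool) (i : ℕ) :
    delta1 (bcons c a) (i + 1) = bcons c (delta1 a i) := by
  unfold delta1
  have h0 : bcons c a (i + 1) = a i := rfl
  rw [h0]
  by_cases h : a i = true
  · rw [if_pos h, if_pos h]
    funext j
    cases j with
    | zero => simp [deleteAt, bcons]
    | succ n =>
      simp only [deleteAt, bcons]
      by_cases hn : n < i
      · rw [if_pos (by omega : n + 1 < i + 1), if_pos hn]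
      · rw [if_neg (by omega : ¬ n + 1 < i + 1), if_neg hn]
  · rw [if_neg h, if_neg h]

lemma reach1_bcons (c : Bool) {a a' : ℕ → Bool} (h : Reach1 a a') :
    Reach1 (bcons c a) (bcons c a') := by
  refine Relation.ReflTransGen.lift (bcons c) ?_ _ _ h
  rintro x y ⟨i, rfl⟩
  exact ⟨i + 1, (delta1_bcons c x i).symm⟩

lemma reach1_limit : ∀ (N : ℕ) (η : ℕ → Bool), (∀ i, N ≤ i → η i = true) →
    Reach1 η (fun i => decide (zc η N ≤ i)) := by
  intro N
  induction N with
  | zero =>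
    intro η h
    have he : (fun i => decide (zc η 0 ≤ i)) = η := by
      funext i; simp [zc, h i (Nat.zero_le i)]
    rw [he]
    exact Relation.ReflTransGen.refl
  | succ N ih =>
    intro N'
    intro h
    cases h0 : N' 0 with
    | true =>
      have hstep : delta1 N' 0 = fun i => N' (i + 1) := by
        rw [delta1, if_pos h0]; funext j; simp [deleteAt]
      have h' : ∀ i, N ≤ i → N' (i + 1) = true := fun i hi => h (i + 1) (by omega)
      have hz : (fun i => decide (zc N' (N + 1) ≤ i)) =
          fun i => decide (zc (fun i => N' (i + 1)) N ≤ i) := by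
        funext i; simp [zc, h0]
      rw [hz]
      exact Relation.ReflTransGen.head ⟨0, hstep.symm⟩ (ih _ h')
    | false =>
      have h' : ∀ i, N ≤ i → N' (i + 1) = true := fun i hi => h (i + 1) (by omega)
      have hr := reach1_bcons false (ih _ h')
      have he : bcons false (fun i => N' (i + 1)) = N' := by
        funext j
        cases j with
        | zero => simp [bcons, h0]
        | succ n => rfl
      have hl : bcons false (fun i => decide (zc (fun i => N' (i + 1)) N ≤ i)) =
          fun i => decide (zc N' (N + 1) ≤ i) := by
        have hz : zc N' (N + 1) = 1 + zc (fun i => N' (i + 1)) N := by simp [zc, h0]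
        funext j
        cases j with
        | zero => simp [bcons, hz]
        | succ n =>
          simp only [bcons, hz]
          rw [decide_eq_decide]
          omega
      rw [he, hl] at hr
      exact hr

lemma inf_delta0 {ξ : ℕ → Bool} (h : ∀ q, ∃ r, q ≤ r ∧ ξ r = true) (i : ℕ) :
    ∀ q, ∃ r, q ≤ r ∧ delta0 ξ i r = true := by
  rw [delta0]
  split
  · intro q
    obtain ⟨r, hr, ht⟩ := h (max (q + 1) (i + 1))
    have h1 : q + 1 ≤ r := le_trans (le_max_left _ _) hr
    have h2 : i + 1 ≤ r := le_trans (le_max_right _ _) hr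
    refine ⟨r - 1, by omega, ?_⟩
    simp only [deleteAt]
    rw [if_neg (by omega)]
    have hr1 : r - 1 + 1 = r := by omega
    rw [hr1]; exact ht
  · exact h

lemma inf_reach0 {ξ ξ' : ℕ → Bool} (h : Reach0 ξ ξ')
    (hinf : ∀ q, ∃ r, q ≤ r ∧ ξ r = true) : ∀ q, ∃ r, q ≤ r ∧ ξ' r = true := by
  induction h with
  | refl => exact hinf
  | tail _ hstep ih =>
    obtain ⟨i, rfl⟩ := hstep
    exact inf_delta0 ih i

lemma reach0_make_true : ∀ (d : ℕ) (ξ : ℕ → Bool) (n : ℕ), ξ (n + d) = true →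
    ∃ ξ', Reach0 ξ ξ' ∧ (∀ j, j < n → ξ' j = ξ j) ∧ ξ' n = true := by
  intro d
  induction d with
  | zero =>
    intro ξ n h
    exact ⟨ξ, Relation.ReflTransGen.refl, fun _ _ => rfl, by simpa using h⟩
  | succ d ih =>
    intro ξ n h
    cases hn : ξ n with
    | true => exact ⟨ξ, Relation.ReflTransGen.refl, fun _ _ => rfl, hn⟩
    | false =>
      have hstep : delta0 ξ n = deleteAt ξ n := by rw [delta0, if_pos hn]
      have h1 : deleteAt ξ n (n + d) = true := by
        simp only [deleteAt]
        rw [if_neg (by omega)]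
        have : n + d + 1 = n + (d + 1) := by omega
        rw [this]; exact h
      obtain ⟨ξ', hr, hpre, htrue⟩ := ih (deleteAt ξ n) n h1
      refine ⟨ξ', Relation.ReflTransGen.head ⟨n, hstep.symm⟩ hr, ?_, htrue⟩
      intro j hj
      rw [hpre j hj]
      simp only [deleteAt]
      rw [if_pos hj]

lemma reach0_prefix (m : ℕ) (ξ : ℕ → Bool) (hinf : ∀ q, ∃ r, q ≤ r ∧ ξ r = true) :
    ∀ k, ∃ ξ', Reach0 ξ ξ' ∧ (∀ j, j < m → ξ' j = ξ j) ∧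
      ∀ j, m ≤ j → j < m + k → ξ' j = true := by
  intro k
  induction k with
  | zero => exact ⟨ξ, Relation.ReflTransGen.refl, fun _ _ => rfl, fun j h1 h2 => by omega⟩
  | succ k ih =>
    obtain ⟨ξ₁, hr1, hpre1, htr1⟩ := ih
    have hinf1 := inf_reach0 hr1 hinf
    obtain ⟨r, hr, ht⟩ := hinf1 (m + k)
    have ht' : ξ₁ ((m + k) + (r - (m + k))) = true := by
      have he : (m + k) + (r - (m + k)) = r := by omega
      rw [he]; exact ht
    obtain ⟨ξ', hr2, hpre2, htr2⟩ := reach0_make_true _ ξ₁ (m + k) ht'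
    refine ⟨ξ', hr1.trans hr2, ?_, ?_⟩
    · intro j hj
      rw [hpre2 j (by omega), hpre1 j hj]
    · intro j h1 h2
      rcases Nat.lt_or_ge j (m + k) with hlt | hge
      · rw [hpre2 j hlt]; exact htr1 j h1 hlt
      · have hj : j = m + k := by omega
        rw [hj]; exact htr2

lemma compatible_of (η : ℕ → Bool) (N : ℕ) (hN : ∀ i, N ≤ i → η i = true)
    (ξ : ℕ → Bool) (hpre : ∀ i, i < zc η N → ξ i = false)
    (hinf : ∀ q, ∃ r, q ≤ r ∧ ξ r = true) : Compatible η ξ := by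
  have hη1 : Reach1 η (fun i => decide (zc η N ≤ i)) := reach1_limit N η hN
  choose ξs hre hp ht using reach0_prefix (zc η N) ξ hinf
  refine ⟨fun _ => fun i => decide (zc η N ≤ i), ξs, fun i => decide (zc η N ≤ i),
    fun _ => hη1, hre, tendsto_const_nhds, ?_⟩
  refine tendsto_pi_nhds.2 fun i => ?_
  have hev : ∀ᶠ k in atTop, (fun _ : ℕ => decide (zc η N ≤ i)) k = ξs k i := by
    filter_upwards [Filter.eventually_ge_atTop (i + 1)] with k hk
    rcases Nat.lt_or_ge i (zc η N) with him | him
    · rw [hp k i him, hpre i him]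
      simp [Nat.not_le.mpr him]
    · rw [ht k i him (by omega)]
      simp [him]
  exact Filter.Tendsto.congr' hev tendsto_const_nhds

theorem statement_1 (η : ℕ → Bool) (hη : {i : ℕ | η i = false}.Finite)
    (p : ℝ) (hp0 : 0 < p) (hp1 : p < 1)
    (μ : Measure (ℕ → Bool)) (hμ : IsBernoulliProduct μ p) :
    0 < μ {ξ | Compatible η ξ} := by
  obtain ⟨hprob, hprod⟩ := hμ
  obtain ⟨N, hNr⟩ := hη.toFinset.exists_nat_subset_range
  have hNtrue : ∀ i, N ≤ i → η i = true := by
    intro i hi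
    by_contra hfi
    have hf : η i = false := by
      cases h : η i
      · rfl
      · exact absurd h hfi
    have : i ∈ hη.toFinset := hη.mem_toFinset.2 hf
    have := Finset.mem_range.1 (hNr this)
    omega
  set m := zc η N with hm
  set A : Set (ℕ → Bool) := {ξ | ∀ i ∈ Finset.range m, ξ i = (fun _ => false) i} with hAdef
  have hA : μ A = ENNReal.ofReal (1 - p) ^ m := by
    rw [hAdef, hprod (Finset.range m) (fun _ => false)]
    simp [Finset.prod_const]
  set F : Set (ℕ → Bool) := {ξ | ∃ n, ∀ i, n ≤ i → ξ i = false} with hFdef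
  have hlt1 : ENNReal.ofReal (1 - p) < 1 := by
    rw [ENNReal.ofReal_lt_one]; linarith
  have hFn : ∀ n : ℕ, μ {ξ : ℕ → Bool | ∀ i, n ≤ i → ξ i = false} = 0 := by
    intro n
    have key : ∀ K : ℕ, μ {ξ : ℕ → Bool | ∀ i, n ≤ i → ξ i = false} ≤
        ENNReal.ofReal (1 - p) ^ K := by
      intro K
      have hsub : {ξ : ℕ → Bool | ∀ i, n ≤ i → ξ i = false} ⊆
          {ξ | ∀ i ∈ Finset.Ico n (n + K), ξ i = (fun _ => false) i} := by
        intro ξ hξ i hi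
        exact hξ i (Finset.mem_Ico.1 hi).1
      refine le_trans (measure_mono hsub) ?_
      rw [hprod (Finset.Ico n (n + K)) (fun _ => false)]
      simp [Finset.prod_const, Nat.card_Ico]
    have htend := ENNReal.tendsto_pow_atTop_nhds_zero_of_lt_one hlt1
    have hle : μ {ξ : ℕ → Bool | ∀ i, n ≤ i → ξ i = false} ≤ 0 :=
      ge_of_tendsto' htend key
    exact le_antisymm hle zero_le
  have hF : μ F = 0 := by
    have hFU : F = ⋃ n : ℕ, {ξ : ℕ → Bool | ∀ i, n ≤ i → ξ i = false} := by
      ext ξ; simp [hFdef]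
    rw [hFU]
    refine le_antisymm (le_trans (measure_iUnion_le _) ?_) zero_le
    simp [hFn]
  have hsub : A \ F ⊆ {ξ | Compatible η ξ} := by
    rintro ξ ⟨hξA, hξF⟩
    refine compatible_of η N hNtrue ξ ?_ ?_
    · intro i hi
      exact hξA i (Finset.mem_range.2 hi)
    · intro q
      by_contra hq
      push_neg at hq
      refine hξF ⟨q, fun i hi => ?_⟩
      have := hq i hi
      cases h : ξ i
      · rfl
      · exact absurd h this
  have hge : μ A ≤ μ (A \ F) := by
    calc μ A ≤ μ ((A \ F) ∪ F) := by
          refine measure_mono ?_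
          intro x hx
          by_cases h : x ∈ F
          · exact Or.inr h
          · exact Or.inl ⟨hx, h⟩
      _ ≤ μ (A \ F) + μ F := measure_union_le _ _
      _ = μ (A \ F) := by rw [hF, add_zero]
  have hApos : 0 < μ A := by
    rw [hA]
    exact ENNReal.pow_pos (ENNReal.ofReal_pos.2 (by linarith)) m
  exact lt_of_lt_of_le (lt_of_lt_of_le hApos hge) (measure_mono hsub)


end Paper
end

section
/- Let η, ξ ∈ Ξ_∞ (binary sequences with infinitely many ones and infinitely many zeroes), and set ζ = f(η), ψ = f(ξ). If the pair of weighted words (ζ, ψ) is compatible (in the weighted-word sense), then the pair of binary sequences (η, ξ) is compatible. -/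
open Filter Set MeasureTheory
open scoped ENNReal NNReal

namespace Paper

/-! ### Auxiliary development for statement_2 -/

/-- Starting position of the `j`-th block when expanding a weighted word. -/
noncomputable def bpos (ψ : ℕ → ℕ) : ℕ → ℕ
  | 0 => 0
  | j + 1 => bpos ψ j + max (ψ j) 1

/-- Position `n` is inside a run of ones of the expansion of `ψ`. -/
def bP (ψ : ℕ → ℕ) (n : ℕ) : Prop := ∃ j, bpos ψ j ≤ n ∧ n < bpos ψ j + ψ j

open Classical in
/-- The expansion of a weighted word into a binary sequence (inverse of `fmap`). -/
noncomputable def bg (ψ : ℕ → ℕ) : ℕ → Bool := fun n => if bP ψ n then true else false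

lemma bg_congr'' {ψ ψ' : ℕ → ℕ} {n m : ℕ} (h : bP ψ n ↔ bP ψ' m) : bg ψ n = bg ψ' m := by
  classical
  simp only [bg]
  exact if_congr h rfl rfl

lemma bg_eq_true {ψ : ℕ → ℕ} {n : ℕ} : bg ψ n = true ↔ bP ψ n := by
  classical
  by_cases h : bP ψ n <;> simp [bg, h]

lemma bg_eq_false {ψ : ℕ → ℕ} {n : ℕ} : bg ψ n = false ↔ ¬ bP ψ n := by
  classical
  by_cases h : bP ψ n <;> simp [bg, h]

lemma bpos_succ (ψ : ℕ → ℕ) (j : ℕ) : bpos ψ (j + 1) = bpos ψ j + max (ψ j) 1 := rfl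

lemma bpos_add_le (ψ : ℕ → ℕ) (j : ℕ) : bpos ψ j + ψ j ≤ bpos ψ (j + 1) := by
  have := le_max_left (ψ j) 1
  rw [bpos_succ]; omega

lemma bpos_strictMono (ψ : ℕ → ℕ) : StrictMono (bpos ψ) :=
  strictMono_nat_of_lt_succ fun j => by
    have := le_max_right (ψ j) 1
    rw [bpos_succ]; omega

lemma bpos_mono (ψ : ℕ → ℕ) : Monotone (bpos ψ) := (bpos_strictMono ψ).monotone

lemma bpos_block_le {ψ : ℕ → ℕ} {j k : ℕ} (h : j < k) : bpos ψ j + ψ j ≤ bpos ψ k :=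
  le_trans (bpos_add_le ψ j) (bpos_mono ψ h)

lemma self_le_bpos (ψ : ℕ → ℕ) (j : ℕ) : j ≤ bpos ψ j := (bpos_strictMono ψ).le_apply

lemma bP_of_pos {ψ : ℕ → ℕ} {i : ℕ} (h : 1 ≤ ψ i) : bP ψ (bpos ψ i) :=
  ⟨i, le_refl _, by omega⟩

lemma not_bP_of_zero {ψ : ℕ → ℕ} {i : ℕ} (h : ψ i = 0) : ¬ bP ψ (bpos ψ i) := by
  rintro ⟨j, h1, h2⟩
  rcases lt_trichotomy j i with hj | rfl | hj
  · have := bpos_block_le (ψ := ψ) hj; omega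
  · omega
  · have := bpos_strictMono ψ hj; omega

lemma bpos_congr {ψ ψ' : ℕ → ℕ} : ∀ j, (∀ m < j, ψ m = ψ' m) → bpos ψ j = bpos ψ' j
  | 0, _ => rfl
  | j + 1, h => by
      rw [bpos_succ, bpos_succ, bpos_congr j (fun m hm => h m (by omega)), h j (by omega)]

lemma bg_congr {ψ ψ' : ℕ → ℕ} {n : ℕ} (h : ∀ m ≤ n, ψ m = ψ' m) : bg ψ n = bg ψ' n := by
  apply bg_congr''
  constructor
  · rintro ⟨j, h1, h2⟩
    have hj : j ≤ n := le_trans (self_le_bpos ψ j) h1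
    have hp : bpos ψ j = bpos ψ' j := bpos_congr j (fun m hm => h m (by omega))
    exact ⟨j, by rw [← hp]; exact h1, by rw [← hp, ← h j hj]; exact h2⟩
  · rintro ⟨j, h1, h2⟩
    have hj : j ≤ n := le_trans (self_le_bpos ψ' j) h1
    have hp : bpos ψ j = bpos ψ' j := bpos_congr j (fun m hm => h m (by omega))
    exact ⟨j, by rw [hp]; exact h1, by rw [hp, h j hj]; exact h2⟩

lemma deleteAt_lt {α : Type*} (ξ : ℕ → α) {i j : ℕ} (h : j < i) : deleteAt ξ i j = ξ j :=
  if_pos h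

lemma deleteAt_ge {α : Type*} (ξ : ℕ → α) {i j : ℕ} (h : i ≤ j) :
    deleteAt ξ i j = ξ (j + 1) := if_neg (by omega)

lemma bpos_deleteAt_le {ψ : ℕ → ℕ} {i : ℕ} : ∀ j ≤ i, bpos (deleteAt ψ i) j = bpos ψ j := by
  intro j hj
  exact bpos_congr j (fun m hm => deleteAt_lt ψ (by omega))

lemma bpos_deleteAt_ge {ψ : ℕ → ℕ} {i : ℕ} (h : ψ i ≤ 1) :
    ∀ j, i ≤ j → bpos (deleteAt ψ i) j + 1 = bpos ψ (j + 1) := by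
  intro j hj
  induction j with
  | zero =>
      have hi : i = 0 := by omega
      subst hi
      have : bpos (deleteAt ψ 0) 0 = 0 := rfl
      rw [this, bpos_succ]
      have : max (ψ 0) 1 = 1 := by omega
      rw [this]; rfl
  | succ j ih =>
      rcases Nat.lt_or_ge i (j + 1) with hij | hij
      · have hd : deleteAt ψ i j = ψ (j + 1) := deleteAt_ge ψ (by omega)
        rw [bpos_succ, hd, bpos_succ]
        have := ih (by omega)
        omega
      · have hi : i = j + 1 := by omega
        subst hi
        have hd : deleteAt ψ (j + 1) j = ψ j := deleteAt_lt ψ (by omega)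
        have hp : bpos (deleteAt ψ (j + 1)) j = bpos ψ j :=
          bpos_deleteAt_le j (by omega)
        rw [bpos_succ, hd, hp, bpos_succ, bpos_succ]
        have : max (ψ (j + 1)) 1 = 1 := by omega
        omega

/-- Key lemma 1: deleting a light (≤ 1) entry of the word corresponds to deleting the
corresponding digit of the expansion. -/
lemma bg_deleteAt {ψ : ℕ → ℕ} {i : ℕ} (h : ψ i ≤ 1) :
    bg (deleteAt ψ i) = deleteAt (bg ψ) (bpos ψ i) := by
  funext n
  rcases Nat.lt_or_ge n (bpos ψ i) with hn | hn
  · rw [deleteAt_lt (bg ψ) hn]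
    apply bg_congr''
    constructor
    · rintro ⟨j, h1, h2⟩
      have hj : j < i := by
        by_contra hj
        push_neg at hj
        have h3 : bpos (deleteAt ψ i) i ≤ bpos (deleteAt ψ i) j := bpos_mono _ hj
        rw [bpos_deleteAt_le i (le_refl _)] at h3
        omega
      have hp := bpos_deleteAt_le (ψ := ψ) (i := i) j (by omega)
      have he : deleteAt ψ i j = ψ j := deleteAt_lt ψ hj
      exact ⟨j, by omega, by rw [he] at h2; omega⟩
    · rintro ⟨j, h1, h2⟩
      have hj : j < i := by
        by_contra hj
        push_neg at hj
        have := bpos_mono ψ hj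
        omega
      have hp := bpos_deleteAt_le (ψ := ψ) (i := i) j (by omega)
      have he : deleteAt ψ i j = ψ j := deleteAt_lt ψ hj
      exact ⟨j, by omega, by rw [he]; omega⟩
  · rw [deleteAt_ge (bg ψ) hn]
    apply bg_congr''
    constructor
    · rintro ⟨j, h1, h2⟩
      have hj : i ≤ j := by
        by_contra hj
        push_neg at hj
        have h3 : bpos (deleteAt ψ i) j + deleteAt ψ i j ≤ bpos (deleteAt ψ i) i :=
          bpos_block_le hj
        rw [bpos_deleteAt_le i (le_refl _)] at h3
        omega
      have hp := bpos_deleteAt_ge h j hj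
      have he : deleteAt ψ i j = ψ (j + 1) := deleteAt_ge ψ hj
      exact ⟨j + 1, by omega, by rw [he] at h2; omega⟩
    · rintro ⟨j, h1, h2⟩
      have hj : i + 1 ≤ j := by
        rcases Nat.lt_or_ge j i with hj | hj
        · have := bpos_block_le (ψ := ψ) hj; omega
        · rcases Nat.eq_or_lt_of_le hj with rfl | hj'
          · omega
          · omega
      obtain ⟨j', rfl⟩ : ∃ j', j = j' + 1 := ⟨j - 1, by omega⟩
      have hp := bpos_deleteAt_ge h j' (by omega)
      have he : deleteAt ψ i j' = ψ (j' + 1) := deleteAt_ge ψ (by omega)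
      exact ⟨j', by omega, by rw [he]; omega⟩

lemma bpos_update_le {ψ : ℕ → ℕ} {i v : ℕ} :
    ∀ j ≤ i, bpos (Function.update ψ i v) j = bpos ψ j := by
  intro j hj
  exact bpos_congr j (fun m hm => Function.update_of_ne (by omega) _ _)

lemma bpos_update_ge {ψ : ℕ → ℕ} {i : ℕ} (h : 2 ≤ ψ i) :
    ∀ j, i + 1 ≤ j → bpos (Function.update ψ i (ψ i - 1)) j + 1 = bpos ψ j := by
  intro j hj
  induction j with
  | zero => omega
  | succ j ih =>
      rcases Nat.lt_or_ge i j with hij | hij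
      · rw [bpos_succ, bpos_succ, Function.update_of_ne (by omega)]
        have := ih (by omega)
        omega
      · have hi : i = j := by omega
        subst hi
        rw [bpos_succ, bpos_succ, bpos_update_le i (le_refl _), Function.update_self]
        have h1 : max (ψ i - 1) 1 = ψ i - 1 := by omega
        have h2 : max (ψ i) 1 = ψ i := by omega
        omega

/-- Key lemma 2: decrementing a heavy (≥ 2) entry corresponds to deleting the first
digit of the corresponding run. -/
lemma bg_update {ψ : ℕ → ℕ} {i : ℕ} (h : 2 ≤ ψ i) :
    bg (Function.update ψ i (ψ i - 1)) = deleteAt (bg ψ) (bpos ψ i) := by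
  set ψ' := Function.update ψ i (ψ i - 1) with hψ'
  have he_lt : ∀ j, j ≠ i → ψ' j = ψ j := fun j hj => Function.update_of_ne hj _ _
  have he_i : ψ' i = ψ i - 1 := Function.update_self _ _ _
  have hple : ∀ j ≤ i, bpos ψ' j = bpos ψ j := fun j hj => bpos_update_le j hj
  have hpge : ∀ j, i + 1 ≤ j → bpos ψ' j + 1 = bpos ψ j := fun j hj =>
    bpos_update_ge h j hj
  funext n
  rcases Nat.lt_or_ge n (bpos ψ i) with hn | hn
  · rw [deleteAt_lt (bg ψ) hn]
    apply bg_congr''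
    constructor
    · rintro ⟨j, h1, h2⟩
      have hj : j < i := by
        by_contra hj
        push_neg at hj
        have h3 : bpos ψ' i ≤ bpos ψ' j := bpos_mono _ hj
        have h4 := hple i (le_refl _)
        omega
      have hp := hple j (by omega)
      have he := he_lt j (by omega)
      exact ⟨j, by omega, by omega⟩
    · rintro ⟨j, h1, h2⟩
      have hj : j < i := by
        by_contra hj
        push_neg at hj
        have := bpos_mono ψ hj
        omega
      have hp := hple j (by omega)
      have he := he_lt j (by omega)
      exact ⟨j, by omega, by omega⟩
  · rw [deleteAt_ge (bg ψ) hn]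
    apply bg_congr''
    have hpi : bpos ψ' i = bpos ψ i := hple i (le_refl _)
    constructor
    · rintro ⟨j, h1, h2⟩
      rcases lt_trichotomy j i with hj | hj | hj
      · have h3 : bpos ψ' j + ψ' j ≤ bpos ψ' i := bpos_block_le hj
        omega
      · subst hj
        exact ⟨j, by omega, by omega⟩
      · have hp := hpge j (by omega)
        have he := he_lt j (by omega)
        exact ⟨j, by omega, by omega⟩
    · rintro ⟨j, h1, h2⟩
      rcases lt_trichotomy j i with hj | hj | hj
      · have h3 : bpos ψ j + ψ j ≤ bpos ψ i := bpos_block_le hj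
        omega
      · subst hj
        exact ⟨j, by omega, by omega⟩
      · have hp := hpge j (by omega)
        have he := he_lt j (by omega)
        exact ⟨j, by omega, by omega⟩

section Merge

variable {ψ : ℕ → ℕ} {i : ℕ}

/-- The merged word in the third branch of `pdelta0`. -/
private def mrg (ψ : ℕ → ℕ) (i : ℕ) : ℕ → ℕ := fun j =>
  if j + 1 < i then ψ j else if j + 1 = i then ψ (i - 1) + ψ (i + 1) else ψ (j + 2)

lemma mrg_lt {j : ℕ} (h : j + 1 < i) : mrg ψ i j = ψ j := by simp [mrg, h]

lemma mrg_eq {j : ℕ} (h : j + 1 = i) : mrg ψ i j = ψ (i - 1) + ψ (i + 1) := by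
  simp [mrg, h]

lemma mrg_gt {j : ℕ} (h : i ≤ j) : mrg ψ i j = ψ (j + 2) := by
  have h1 : ¬ (j + 1 < i) := by omega
  have h2 : ¬ (j + 1 = i) := by omega
  simp [mrg, h1, h2]

lemma bpos_mrg_le : ∀ j, j + 1 ≤ i → bpos (mrg ψ i) j = bpos ψ j := by
  intro j hj
  exact bpos_congr j (fun m hm => (mrg_lt (by omega)).symm) |>.symm

lemma bpos_mrg_ge (hi : 1 ≤ i) (h0 : ψ i = 0) (h1 : 1 ≤ ψ (i - 1)) (h2 : 1 ≤ ψ (i + 1)) :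
    ∀ j, i ≤ j → bpos (mrg ψ i) j + 1 = bpos ψ (j + 2) := by
  intro j hj
  induction j with
  | zero => omega
  | succ j ih =>
      show bpos (mrg ψ i) (j + 1) + 1 = bpos ψ (j + 3)
      have e0 : bpos (mrg ψ i) (j + 1) = bpos (mrg ψ i) j + max (mrg ψ i j) 1 :=
        bpos_succ _ _
      have e3 : bpos ψ (j + 3) = bpos ψ (j + 2) + max (ψ (j + 2)) 1 := bpos_succ _ _
      rcases Nat.lt_or_ge i (j + 1) with hij | hij
      · have e1 : mrg ψ i j = ψ (j + 2) := mrg_gt (by omega)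
        have := ih (by omega)
        omega
      · have hij' : i = j + 1 := by omega
        have e1 : mrg ψ i j = ψ (i - 1) + ψ (i + 1) := mrg_eq (by omega)
        have e2 : bpos (mrg ψ i) j = bpos ψ j := bpos_mrg_le j (by omega)
        have e4 : bpos ψ (j + 2) = bpos ψ (j + 1) + max (ψ (j + 1)) 1 := bpos_succ _ _
        have e5 : bpos ψ (j + 1) = bpos ψ j + max (ψ j) 1 := bpos_succ _ _
        have e6 : ψ (i - 1) = ψ j := by rw [show i - 1 = j from by omega]
        have e7 : ψ (i + 1) = ψ (j + 2) := by rw [show i + 1 = j + 2 from by omega]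
        have e8 : ψ (j + 1) = 0 := by rw [show j + 1 = i from by omega]; exact h0
        omega

/-- Key lemma 3: merging two runs across a zero corresponds to deleting that zero. -/
lemma bg_mrg (hi : 1 ≤ i) (h0 : ψ i = 0) (h1 : 1 ≤ ψ (i - 1)) (h2 : 1 ≤ ψ (i + 1)) :
    bg (mrg ψ i) = deleteAt (bg ψ) (bpos ψ i) := by
  have hpi : bpos ψ i = bpos ψ (i - 1) + ψ (i - 1) := by
    have e : bpos ψ (i - 1 + 1) = bpos ψ (i - 1) + max (ψ (i - 1)) 1 := bpos_succ _ _
    have e2 : i - 1 + 1 = i := by omega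
    rw [e2] at e
    omega
  have hpm : bpos (mrg ψ i) (i - 1) = bpos ψ (i - 1) := bpos_mrg_le (i - 1) (by omega)
  have hmi : mrg ψ i (i - 1) = ψ (i - 1) + ψ (i + 1) := mrg_eq (by omega)
  have hpi1 : bpos ψ (i + 1) = bpos ψ i + 1 := by
    rw [bpos_succ]
    have : max (ψ i) 1 = 1 := by omega
    omega
  funext n
  rcases Nat.lt_or_ge n (bpos ψ i) with hn | hn
  · rw [deleteAt_lt (bg ψ) hn]
    apply bg_congr''
    constructor
    · rintro ⟨j, hj1, hj2⟩
      have hj : j ≤ i - 1 := by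
        by_contra hj
        push_neg at hj
        have h3 : bpos (mrg ψ i) i ≤ bpos (mrg ψ i) j := bpos_mono _ (by omega)
        have h4 := bpos_mrg_ge hi h0 h1 h2 i (le_refl _)
        have h5 : bpos ψ i + 2 ≤ bpos ψ (i + 2) := by
          have a1 := bpos_add_le ψ (i + 1)
          have a2 := le_max_right (ψ (i + 1)) 1
          rw [bpos_succ ψ (i + 1)] at *
          omega
        omega
      rcases Nat.eq_or_lt_of_le hj with rfl | hj'
      · rw [hpm] at hj1
        exact ⟨i - 1, hj1, by omega⟩
      · have hp := bpos_mrg_le (ψ := ψ) (i := i) j (by omega)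
        have he : mrg ψ i j = ψ j := mrg_lt (by omega)
        exact ⟨j, by omega, by omega⟩
    · rintro ⟨j, hj1, hj2⟩
      have hj : j ≤ i - 1 := by
        by_contra hj
        push_neg at hj
        rcases Nat.eq_or_lt_of_le (show i ≤ j by omega) with rfl | hj'
        · omega
        · have := bpos_mono ψ (show i + 1 ≤ j by omega)
          omega
      rcases Nat.eq_or_lt_of_le hj with rfl | hj'
      · refine ⟨i - 1, by omega, ?_⟩
        rw [hpm, hmi]
        omega
      · have hp := bpos_mrg_le (ψ := ψ) (i := i) j (by omega)
        have he : mrg ψ i j = ψ j := mrg_lt (by omega)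
        exact ⟨j, by omega, by omega⟩
  · rw [deleteAt_ge (bg ψ) hn]
    apply bg_congr''
    constructor
    · rintro ⟨j, hj1, hj2⟩
      rcases Nat.lt_or_ge j (i - 1) with hj | hj
      · have h3 : bpos (mrg ψ i) j + mrg ψ i j ≤ bpos (mrg ψ i) (i - 1) :=
          bpos_block_le hj
        rw [hpm] at h3
        have h4 : bpos ψ (i - 1) ≤ bpos ψ i := bpos_mono ψ (by omega)
        omega
      rcases Nat.eq_or_lt_of_le hj with rfl | hj'
      · refine ⟨i + 1, by omega, ?_⟩
        rw [hpm, hmi] at *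
        omega
      · have hij : i ≤ j := by omega
        have hp := bpos_mrg_ge hi h0 h1 h2 j hij
        have he : mrg ψ i j = ψ (j + 2) := mrg_gt hij
        exact ⟨j + 2, by omega, by omega⟩
    · rintro ⟨j, hj1, hj2⟩
      have hj : i + 1 ≤ j := by
        rcases Nat.lt_or_ge j i with hj | hj
        · rcases Nat.lt_or_ge j (i - 1) with hj'' | hj''
          · have := bpos_block_le (ψ := ψ) (show j < i - 1 by omega)
            have := bpos_mono ψ (show i - 1 ≤ i by omega)
            omega
          · have : j = i - 1 := by omega
            subst this
            omega
        · rcases Nat.eq_or_lt_of_le hj with rfl | hj'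
          · omega
          · omega
      rcases Nat.eq_or_lt_of_le hj with rfl | hj'
      · refine ⟨i - 1, ?_, ?_⟩
        · rw [hpm]; omega
        · rw [hpm, hmi]; omega
      · obtain ⟨j', rfl⟩ : ∃ j', j = j' + 2 := ⟨j - 2, by omega⟩
        have hp := bpos_mrg_ge hi h0 h1 h2 j' (by omega)
        have he : mrg ψ i j' = ψ (j' + 2) := mrg_gt (by omega)
        exact ⟨j', by omega, by omega⟩

end Merge

/-! ### Lifting the operators -/

lemma reach1_step (ψ : ℕ → ℕ) (i : ℕ) : Reach1 (bg ψ) (bg (pdelta1 ψ i)) := by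
  rcases Nat.lt_or_ge (ψ i) 1 with h | h
  · have h0 : ψ i = 0 := by omega
    have : pdelta1 ψ i = ψ := by rw [pdelta1, if_pos h0]
    rw [this]
    exact Relation.ReflTransGen.refl
  · refine Relation.ReflTransGen.single ⟨bpos ψ i, ?_⟩
    have hT : bg ψ (bpos ψ i) = true := bg_eq_true.mpr (bP_of_pos h)
    rw [delta1, if_pos hT]
    rcases Nat.eq_or_lt_of_le h with h1 | h2
    · have : pdelta1 ψ i = deleteAt ψ i := by
        rw [pdelta1, if_neg (by omega), if_pos h1.symm]
      rw [this, bg_deleteAt (by omega)]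
    · have : pdelta1 ψ i = Function.update ψ i (ψ i - 1) := by
        rw [pdelta1, if_neg (by omega), if_neg (by omega)]
      rw [this, bg_update (by omega)]

lemma reach0_step (ψ : ℕ → ℕ) (i : ℕ) : Reach0 (bg ψ) (bg (pdelta0 ψ i)) := by
  by_cases h0 : ψ i = 0
  · refine Relation.ReflTransGen.single ⟨bpos ψ i, ?_⟩
    have hF : bg ψ (bpos ψ i) = false := bg_eq_false.mpr (not_bP_of_zero h0)
    rw [delta0, if_pos hF]
    by_cases hg : i = 0 ∨ ψ (i - 1) = 0 ∨ ψ (i + 1) = 0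
    · have : pdelta0 ψ i = deleteAt ψ i := by
        rw [pdelta0, if_neg (by simpa using h0), if_pos hg]
      rw [this, bg_deleteAt (by omega)]
    · push_neg at hg
      obtain ⟨hi, h1, h2⟩ := hg
      have : pdelta0 ψ i = mrg ψ i := by
        rw [pdelta0, if_neg (by simpa using h0), if_neg (by push_neg; exact ⟨hi, h1, h2⟩)]
        rfl
      rw [this, bg_mrg (by omega) h0 (by omega) (by omega)]
  · have : pdelta0 ψ i = ψ := by rw [pdelta0, if_pos h0]
    rw [this]
    exact Relation.ReflTransGen.refl

lemma reach1_lift {a b : ℕ → ℕ} (h : PReach1 a b) : Reach1 (bg a) (bg b) := by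
  induction h with
  | refl => exact Relation.ReflTransGen.refl
  | tail _ hbc ih =>
      obtain ⟨i, rfl⟩ := hbc
      exact ih.trans (reach1_step _ i)

lemma reach0_lift {a b : ℕ → ℕ} (h : PReach0 a b) : Reach0 (bg a) (bg b) := by
  induction h with
  | refl => exact Relation.ReflTransGen.refl
  | tail _ hbc ih =>
      obtain ⟨i, rfl⟩ := hbc
      exact ih.trans (reach0_step _ i)

/-! ### `bg` is a left inverse of `fmap` -/

lemma runLen_spec {ξ : ℕ → Bool} (hz : ∀ n, ∃ k, ξ (n + k) = false) (m : ℕ) :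
    ξ (m + runLen ξ m) = false ∧ ∀ t < runLen ξ m, ξ (m + t) = true := by
  classical
  have h : ∃ k, ξ (m + k) = false := hz m
  rw [runLen]
  rw [dif_pos h]
  refine ⟨Nat.find_spec h, fun t ht => ?_⟩
  have := Nat.find_min h ht
  simpa using this

lemma fpos_eq_bpos (ξ : ℕ → Bool) : ∀ j, fpos ξ j = bpos (fmap ξ) j
  | 0 => rfl
  | j + 1 => by
      rw [fpos, bpos_succ, fpos_eq_bpos ξ j, fmap]
      rw [← fpos_eq_bpos ξ j]

lemma exists_block (ψ : ℕ → ℕ) (n : ℕ) : ∃ j, bpos ψ j ≤ n ∧ n < bpos ψ (j + 1) := by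
  induction n with
  | zero =>
      refine ⟨0, le_refl _, ?_⟩
      show 0 < bpos ψ 1
      have h1 : bpos ψ 1 = bpos ψ 0 + max (ψ 0) 1 := bpos_succ _ _
      have h0 : bpos ψ 0 = 0 := rfl
      omega
  | succ n ih =>
      obtain ⟨j, h1, h2⟩ := ih
      rcases Nat.lt_or_ge (n + 1) (bpos ψ (j + 1)) with h | h
      · exact ⟨j, by omega, h⟩
      · refine ⟨j + 1, by omega, ?_⟩
        have := bpos_strictMono ψ (show j + 1 < j + 1 + 1 by omega)
        omega

lemma bg_fmap {ξ : ℕ → Bool} (hz : ∀ n, ∃ k, ξ (n + k) = false) : bg (fmap ξ) = ξ := by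
  funext n
  have hchar : bP (fmap ξ) n ↔ ξ n = true := by
    constructor
    · rintro ⟨j, h1, h2⟩
      have hf := fpos_eq_bpos ξ j
      have hr := (runLen_spec hz (fpos ξ j)).2 (n - fpos ξ j) (by
        have : fmap ξ j = runLen ξ (fpos ξ j) := rfl
        omega)
      have : fpos ξ j + (n - fpos ξ j) = n := by omega
      rwa [this] at hr
    · intro hT
      obtain ⟨j, h1, h2⟩ := exists_block (fmap ξ) n
      refine ⟨j, h1, ?_⟩
      by_contra hc
      push_neg at hc
      have hmax : bpos (fmap ξ) (j + 1) = bpos (fmap ξ) j + max (fmap ξ j) 1 := bpos_succ _ _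
      have h0 : fmap ξ j = 0 ∧ n = bpos (fmap ξ) j := by
        rcases Nat.lt_or_ge (fmap ξ j) 1 with h | h
        · omega
        · have : max (fmap ξ j) 1 = fmap ξ j := by omega
          omega
      have hf := fpos_eq_bpos ξ j
      have hfind := (runLen_spec hz (fpos ξ j)).1
      have hrl : runLen ξ (fpos ξ j) = 0 := by
        have : fmap ξ j = runLen ξ (fpos ξ j) := rfl
        omega
      rw [hrl, Nat.add_zero] at hfind
      have : fpos ξ j = n := by omega
      rw [this] at hfind
      rw [hfind] at hT
      exact Bool.noConfusion hT
  cases hb : ξ n with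
  | false =>
      rw [bg_eq_false]
      intro hP
      rw [hchar.mp hP] at hb
      exact Bool.noConfusion hb
  | true => exact bg_eq_true.mpr (hchar.mpr hb)

/-! ### Continuity of `bg` -/

lemma tendsto_bg {F : ℕ → ℕ → ℕ} {l : ℕ → ℕ} (h : Tendsto F atTop (nhds l)) :
    Tendsto (fun k => bg (F k)) atTop (nhds (bg l)) := by
  rw [tendsto_pi_nhds] at h ⊢
  intro n
  have hev : ∀ᶠ k in atTop, ∀ m ∈ Finset.range (n + 1), F k m = l m := by
    rw [Filter.eventually_all_finset]
    intro m _
    have hm := h m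
    rwa [nhds_discrete, Filter.tendsto_pure] at hm
  have hbg : ∀ᶠ k in atTop, bg (F k) n = bg l n :=
    hev.mono fun k hk => bg_congr fun m hm => hk m (Finset.mem_range.mpr (by omega))
  rw [nhds_discrete, Filter.tendsto_pure]
  exact hbg


theorem statement_2 (η ξ : ℕ → Bool) (hη : Xinf η) (hξ : Xinf ξ)
    (h : CompatibleP (fmap η) (fmap ξ)) : Compatible η ξ := by
  obtain ⟨ζs, ψs, l, h1, h2, _, _, hc1, hc2⟩ := h
  have hzη : ∀ n, ∃ k, η (n + k) = false := fun n => by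
    obtain ⟨m, hm, hf⟩ := hη.2 n
    exact ⟨m - n, by rwa [Nat.add_sub_cancel' hm]⟩
  have hzξ : ∀ n, ∃ k, ξ (n + k) = false := fun n => by
    obtain ⟨m, hm, hf⟩ := hξ.2 n
    exact ⟨m - n, by rwa [Nat.add_sub_cancel' hm]⟩
  refine ⟨fun k => bg (ζs k), fun k => bg (ψs k), bg l, ?_, ?_, ?_, ?_⟩
  · intro k
    have := reach1_lift (h1 k)
    rwa [bg_fmap hzη] at this
  · intro k
    have := reach0_lift (h2 k)
    rwa [bg_fmap hzξ] at this
  · exact tendsto_bg hc1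
  · exact tendsto_bg hc2

end Paper
end
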